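/- arXiv:1210.6459 — 7 statements merged into one kernel-verified Lean document; each statement's English description precedes it below -/
import Mathlib

section
/- Let C be a completely regular code in F_2^n with minimum distance δ ≥ 3 such that the all-zero vector 0 ∈ C and the all-one vector 1 ∉ C. Then the covering radius ρ of C satisfies ρ ≥ δ − 1, and C_ρ = 1 + C (the translate of C by the all-one vector). -/
/-- Vertices of the binary Hamming graph of length `n`, identified with `F_2^n`. -/
abbrev V (n : ℕ) := Fin n → ZMod 2

/-- Distance of a vertex `α` from a code `C`: `d(α,C) = min_{β ∈ C} d(α,β)`. -/
noncomputable def distTo {n : ℕ} (C : Set (V n)) (α : V n) : ℕ :=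
  sInf (hammingDist α '' C)

/-- Covering radius of a code: the maximum over all vertices of the distance to the code. -/
noncomputable def coveringRadius {n : ℕ} (C : Set (V n)) : ℕ :=
  sSup (Set.range (distTo C))

/-- A code `C` is completely regular if for every `i` and `k`, the number of codewords at
Hamming distance `k` from a vertex `ν` with `d(ν,C) = i` depends only on `i` and `k`. -/
def CompletelyRegular {n : ℕ} (C : Set (V n)) : Prop :=
  ∀ (i k : ℕ) (ν μ : V n), distTo C ν = i → distTo C μ = i →
    {β ∈ C | hammingDist ν β = k}.ncard = {β ∈ C | hammingDist μ β = k}.ncard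

/-- `δ` is the minimum distance of `C`: the least Hamming distance between distinct codewords. -/
def IsMinDist {n : ℕ} (C : Set (V n)) (δ : ℕ) : Prop :=
  (∀ α ∈ C, ∀ β ∈ C, α ≠ β → δ ≤ hammingDist α β) ∧
  (∃ α ∈ C, ∃ β ∈ C, α ≠ β ∧ hammingDist α β = δ)

/-!
Complementation `ν ↦ 1 + ν` is an isometry of the Hamming graph with
`d(1 + ν, c) = n - d(ν, c)`, and complete regularity makes the largest distance from `ν` to a
codeword depend only on `d(ν, C)`. Hence complementation maps each level `C_i` into a single level
`C_{g i}`. The map `g` on `{0, …, ρ}` is an involution, and it is 1-Lipschitz because any two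
levels are joined by a geodesic, so it is an isometry of the path `0 — 1 — ⋯ — ρ`. As
`g 0 = d(1, C) ≠ 0`, it is the reversal `i ↦ ρ - i`, which gives `C_ρ = 1 + C`.

For the bound, suppose `ρ ≤ δ - 2` and take `ν` at level `i = ⌈ρ / 2⌉`. Inside the packing radius,
`ν` has exactly `i` neighbours one level lower, while `1 + ν`, at level `ρ - i`, has exactly
`n - (ρ - i)` neighbours one level higher. Complementation matches these two sets of neighbours,
so `n = ρ`; but a nonzero codeword forces `ρ = d(1, C) ≤ n - δ`.
-/

open Finset

section Hamming

variable {ι β : Type*} [Fintype ι] [DecidableEq β]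

lemma hammingDist_add_add_left [Add β] [IsLeftCancelAdd β] (a x y : ι → β) :
    hammingDist (a + x) (a + y) = hammingDist x y :=
  hammingDist_comp (fun i => (a i + ·)) fun i => add_right_injective (a i)

lemma exists_hammingDist_le_of_le (x y : ι → β) {k : ℕ} (hk : k ≤ hammingDist x y) :
    ∃ z, hammingDist x z ≤ k ∧ hammingDist z y ≤ hammingDist x y - k := by
  classical
  obtain ⟨S, hSsub, hScard⟩ := exists_subset_card_eq hk
  refine ⟨fun i => if i ∈ S then y i else x i, ?_, ?_⟩
  · refine hScard ▸ card_le_card fun i hi => ?_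
    by_contra hiS
    simp [hiS] at hi
  · have hsub : ({i | (if i ∈ S then y i else x i) ≠ y i} : Finset ι) ⊆
        ({i | x i ≠ y i} : Finset ι) \ S := fun i hi => by
      by_cases hiS : i ∈ S <;> simp_all
    exact (card_le_card hsub).trans (by rw [card_sdiff_of_subset hSsub, hScard]; rfl)

end Hamming

variable {n : ℕ}

lemma one_add_one_add (x : V n) : 1 + (1 + x) = x :=
  funext fun i => CharTwo.add_cancel_left (1 : ZMod 2) (x i)

lemma hammingDist_le (x y : V n) : hammingDist x y ≤ n := by
  simpa using hammingDist_le_card_fintype (x := x) (y := y)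

lemma hammingDist_one_add_left (x y : V n) : hammingDist (1 + x) y = n - hammingDist x y := by
  have hcompl :
      ({i | (1 + x) i ≠ y i} : Finset (Fin n)) = ({i | x i ≠ y i} : Finset (Fin n))ᶜ := by
    ext i
    simpa using (show ∀ a b : ZMod 2, 1 + a ≠ b ↔ a = b by decide) (x i) (y i)
  simp only [hammingDist, hcompl, card_compl, Fintype.card_fin]

lemma hammingDist_add_single_add_one {x y : V n} {k : Fin n} (h : x k ≠ y k) :
    hammingDist (x + Pi.single k 1) y + 1 = hammingDist x y := by
  have herase : ({i | (x + Pi.single k 1 : V n) i ≠ y i} : Finset (Fin n)) =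
      ({i | x i ≠ y i} : Finset (Fin n)).erase k := by
    ext i
    rcases eq_or_ne i k with rfl | hi
    · simpa using (show ∀ a b : ZMod 2, a ≠ b → a + 1 = b by decide) _ _ h
    · simp [hi]
  rw [hammingDist, herase, card_erase_add_one (by simpa using h)]
  rfl

lemma hammingDist_add_single_of_eq {x y : V n} {k : Fin n} (h : x k = y k) :
    hammingDist (x + Pi.single k 1) y = hammingDist x y + 1 := by
  have hflip : x + Pi.single k 1 + Pi.single k 1 = x := by
    rw [add_assoc, ← Pi.single_add, CharTwo.add_self_eq_zero, Pi.single_zero, add_zero]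
  have := hammingDist_add_single_add_one (x := x + Pi.single k 1) (y := y) (k := k) (by simp [h])
  rwa [hflip, eq_comm] at this

lemma hammingDist_add_single_self (x : V n) (k : Fin n) :
    hammingDist x (x + Pi.single k 1) = 1 := by
  rw [hammingDist_comm, hammingDist_add_single_of_eq rfl, hammingDist_self]

section distTo

variable {C : Set (V n)}

lemma distTo_le_hammingDist {c : V n} (hc : c ∈ C) (α : V n) : distTo C α ≤ hammingDist α c :=
  Nat.sInf_le ⟨c, hc, rfl⟩

lemma exists_hammingDist_eq_distTo (hC : C.Nonempty) (α : V n) :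
    ∃ c ∈ C, hammingDist α c = distTo C α :=
  Nat.sInf_mem (hC.image _)

lemma distTo_eq_zero_iff (hC : C.Nonempty) {α : V n} : distTo C α = 0 ↔ α ∈ C := by
  refine ⟨fun h => ?_, fun h => by simpa using distTo_le_hammingDist h α⟩
  obtain ⟨c, hc, hαc⟩ := exists_hammingDist_eq_distTo hC α
  rw [h, hammingDist_eq_zero] at hαc
  rwa [hαc]

lemma distTo_le_distTo_add_hammingDist (hC : C.Nonempty) (α β : V n) :
    distTo C α ≤ distTo C β + hammingDist α β := by
  obtain ⟨c, hc, hβc⟩ := exists_hammingDist_eq_distTo hC β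
  calc distTo C α ≤ hammingDist α c := distTo_le_hammingDist hc α
    _ ≤ hammingDist α β + hammingDist β c := hammingDist_triangle _ _ _
    _ = distTo C β + hammingDist α β := by rw [hβc, add_comm]

lemma bddAbove_range_distTo (hC : C.Nonempty) : BddAbove (Set.range (distTo C)) := by
  obtain ⟨c, hc⟩ := hC
  refine ⟨n, ?_⟩
  rintro _ ⟨α, rfl⟩
  exact (distTo_le_hammingDist hc α).trans (hammingDist_le α c)

lemma distTo_le_coveringRadius (hC : C.Nonempty) (α : V n) : distTo C α ≤ coveringRadius C :=
  le_csSup (bddAbove_range_distTo hC) ⟨α, rfl⟩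

lemma exists_distTo_eq_coveringRadius (hC : C.Nonempty) : ∃ α, distTo C α = coveringRadius C :=
  Nat.sSup_mem (Set.range_nonempty _) (bddAbove_range_distTo hC)

lemma exists_distTo_eq_of_le (hC : C.Nonempty) {μ : V n} {i : ℕ} (hi : i ≤ distTo C μ) :
    ∃ ν, distTo C ν = i ∧ hammingDist μ ν ≤ distTo C μ - i := by
  obtain ⟨c, hc, hμc⟩ := exists_hammingDist_eq_distTo hC μ
  obtain ⟨ν, hμν, hνc⟩ := exists_hammingDist_le_of_le μ c (k := distTo C μ - i) (by omega)
  refine ⟨ν, le_antisymm ((distTo_le_hammingDist hc ν).trans (by omega)) ?_, hμν⟩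
  have := distTo_le_distTo_add_hammingDist hC μ ν
  omega

lemma min_le_distTo {δ : ℕ} (hsep : ∀ a ∈ C, ∀ b ∈ C, a ≠ b → δ ≤ hammingDist a b)
    {c : V n} (hc : c ∈ C) (y : V n) :
    min (hammingDist y c) (δ - hammingDist y c) ≤ distTo C y := by
  refine le_csInf (Set.Nonempty.image _ ⟨c, hc⟩) ?_
  rintro _ ⟨c', hc', rfl⟩
  rcases eq_or_ne c c' with rfl | hne
  · exact min_le_left _ _
  · have hδ := hsep c hc c' hc' hne
    have htri := hammingDist_triangle c y c'
    rw [hammingDist_comm c y] at htri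
    omega

end distTo

namespace CompletelyRegular

variable {C : Set (V n)}

lemma exists_hammingDist_eq (hcr : CompletelyRegular C) {ν μ c : V n}
    (h : distTo C ν = distTo C μ) (hc : c ∈ C) : ∃ c' ∈ C, hammingDist μ c' = hammingDist ν c := by
  have hpos : 0 < {β ∈ C | hammingDist ν β = hammingDist ν c}.ncard :=
    (Set.ncard_pos (Set.toFinite _)).2 ⟨c, hc, rfl⟩
  rw [hcr _ _ ν μ rfl h.symm] at hpos
  exact Set.nonempty_of_ncard_ne_zero hpos.ne'

lemma distTo_one_add_le (hcr : CompletelyRegular C) (hC : C.Nonempty) {ν μ : V n}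
    (h : distTo C ν = distTo C μ) : distTo C (1 + μ) ≤ distTo C (1 + ν) := by
  obtain ⟨c, hc, hνc⟩ := exists_hammingDist_eq_distTo hC (1 + ν)
  obtain ⟨c', hc', hμc'⟩ := hcr.exists_hammingDist_eq h hc
  calc distTo C (1 + μ) ≤ hammingDist (1 + μ) c' := distTo_le_hammingDist hc' _
    _ = distTo C (1 + ν) := by
      rw [hammingDist_one_add_left, hμc', ← hνc, hammingDist_one_add_left]

lemma distTo_one_add_congr (hcr : CompletelyRegular C) (hC : C.Nonempty) {ν μ : V n}
    (h : distTo C ν = distTo C μ) : distTo C (1 + ν) = distTo C (1 + μ) :=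
  le_antisymm (hcr.distTo_one_add_le hC h.symm) (hcr.distTo_one_add_le hC h)

lemma abs_distTo_one_add_sub_le (hcr : CompletelyRegular C) (hC : C.Nonempty) (ν μ : V n) :
    |(distTo C (1 + ν) : ℤ) - distTo C (1 + μ)| ≤ |(distTo C ν : ℤ) - distTo C μ| := by
  wlog h : distTo C ν ≤ distTo C μ generalizing ν μ
  · rw [abs_sub_comm, abs_sub_comm (distTo C ν : ℤ)]
    exact this μ ν (by omega)
  obtain ⟨ν', hν', hμν'⟩ := exists_distTo_eq_of_le hC h
  have hlip := distTo_le_distTo_add_hammingDist hC (1 + ν') (1 + μ)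
  have hlip' := distTo_le_distTo_add_hammingDist hC (1 + μ) (1 + ν')
  rw [hammingDist_add_add_left, hammingDist_comm] at hlip
  rw [hammingDist_add_add_left] at hlip'
  have hcontract : |(distTo C (1 + ν') : ℤ) - distTo C (1 + μ)| ≤ distTo C μ - distTo C ν := by
    rw [abs_sub_le_iff]
    omega
  rwa [← hcr.distTo_one_add_congr hC hν', abs_sub_comm (distTo C ν : ℤ),
    abs_of_nonneg (by omega : (0 : ℤ) ≤ distTo C μ - distTo C ν)]

theorem distTo_one_add (hcr : CompletelyRegular C) (h0 : (0 : V n) ∈ C) (h1 : (1 : V n) ∉ C)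
    (ν : V n) : distTo C (1 + ν) = coveringRadius C - distTo C ν := by
  have hC : C.Nonempty := ⟨0, h0⟩
  have hzero : distTo C 0 = 0 := (distTo_eq_zero_iff hC).2 h0
  have hone : (1 : V n) + 1 = 0 := by simpa using one_add_one_add (0 : V n)
  have hs : distTo C 1 = coveringRadius C := by
    obtain ⟨α, hα⟩ := exists_distTo_eq_coveringRadius hC
    have hiso := hcr.abs_distTo_one_add_sub_le hC (1 + α) 1
    rw [one_add_one_add, hone, hα, hzero, Nat.cast_zero, sub_zero, Nat.abs_cast, le_abs'] at hiso
    have hpos : distTo C 1 ≠ 0 := fun h => h1 ((distTo_eq_zero_iff hC).1 h)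
    have := distTo_le_coveringRadius hC 1
    have := distTo_le_coveringRadius hC (1 + α)
    omega
  have hup := hcr.abs_distTo_one_add_sub_le hC ν 0
  have hdown := hcr.abs_distTo_one_add_sub_le hC (1 + ν) 1
  rw [add_zero, hs, hzero, Nat.cast_zero, sub_zero, Nat.abs_cast, abs_le] at hup
  rw [one_add_one_add, hone, hzero, hs, Nat.cast_zero, sub_zero, Nat.abs_cast, le_abs'] at hdown
  have := distTo_le_coveringRadius hC (1 + ν)
  omega

end CompletelyRegular

section Neighbours

variable {C : Set (V n)}

noncomputable def descents (C : Set (V n)) (ν : V n) : Finset (Fin n) :=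
  {k | distTo C (ν + Pi.single k 1) + 1 = distTo C ν}

noncomputable def ascents (C : Set (V n)) (ν : V n) : Finset (Fin n) :=
  {k | distTo C (ν + Pi.single k 1) = distTo C ν + 1}

lemma CompletelyRegular.descents_eq_ascents_one_add (hcr : CompletelyRegular C)
    (h0 : (0 : V n) ∈ C) (h1 : (1 : V n) ∉ C) (ν : V n) : descents C ν = ascents C (1 + ν) := by
  ext k
  simp only [descents, ascents, mem_filter, mem_univ, true_and, add_assoc,
    hcr.distTo_one_add h0 h1]
  have := distTo_le_coveringRadius ⟨0, h0⟩ ν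
  have := distTo_le_coveringRadius ⟨0, h0⟩ (ν + Pi.single k 1)
  omega

lemma card_descents {δ : ℕ} (hsep : ∀ a ∈ C, ∀ b ∈ C, a ≠ b → δ ≤ hammingDist a b)
    (hC : C.Nonempty) {ν : V n} (h : 2 * distTo C ν < δ) :
    #(descents C ν) = distTo C ν := by
  obtain ⟨c, hc, hνc⟩ := exists_hammingDist_eq_distTo hC ν
  suffices descents C ν = ({k | ν k ≠ c k} : Finset (Fin n)) by rw [this, ← hνc]; rfl
  ext k
  simp only [descents, mem_filter, mem_univ, true_and]
  have hlip := distTo_le_distTo_add_hammingDist hC ν (ν + Pi.single k 1)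
  rw [hammingDist_add_single_self] at hlip
  by_cases hk : ν k = c k
  · have hd := hammingDist_add_single_of_eq hk
    have := min_le_distTo hsep hc (ν + Pi.single k 1)
    simp only [hk, ne_eq, not_true_eq_false, iff_false]
    omega
  · have hd := hammingDist_add_single_add_one hk
    have := distTo_le_hammingDist hc (ν + Pi.single k 1)
    simp only [hk, ne_eq, not_false_eq_true, iff_true]
    omega

lemma card_ascents {δ : ℕ} (hsep : ∀ a ∈ C, ∀ b ∈ C, a ≠ b → δ ≤ hammingDist a b)
    (hC : C.Nonempty) {ν : V n} (h : 2 * (distTo C ν + 1) ≤ δ) :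
    #(ascents C ν) = n - distTo C ν := by
  obtain ⟨c, hc, hνc⟩ := exists_hammingDist_eq_distTo hC ν
  suffices ascents C ν = ({k | ν k ≠ c k} : Finset (Fin n))ᶜ by
    rw [this, card_compl, Fintype.card_fin, ← hνc]; rfl
  ext k
  simp only [ascents, mem_compl, mem_filter, mem_univ, true_and, not_not]
  by_cases hk : ν k = c k
  · have hd := hammingDist_add_single_of_eq hk
    have := min_le_distTo hsep hc (ν + Pi.single k 1)
    have := distTo_le_hammingDist hc (ν + Pi.single k 1)
    simp only [hk, iff_true]
    omega
  · have hd := hammingDist_add_single_add_one hk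
    have := distTo_le_hammingDist hc (ν + Pi.single k 1)
    simp only [hk, iff_false]
    omega

end Neighbours

theorem CompletelyRegular.coveringRadius_add_le {C : Set (V n)} {δ : ℕ}
    (hcr : CompletelyRegular C) (hmin : IsMinDist C δ) (h0 : (0 : V n) ∈ C)
    (h1 : (1 : V n) ∉ C) : coveringRadius C + δ ≤ n := by
  obtain ⟨a, ha, b, hb, hab, -⟩ := hmin.2
  obtain ⟨c, hc, hc0⟩ : ∃ c ∈ C, (0 : V n) ≠ c := by
    by_cases h : (0 : V n) = a
    · exact ⟨b, hb, h ▸ hab⟩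
    · exact ⟨a, ha, h⟩
  have hδc := hmin.1 0 h0 c hc hc0
  have hρc := distTo_le_hammingDist hc 1
  rw [← add_zero 1, hcr.distTo_one_add h0 h1, (distTo_eq_zero_iff ⟨0, h0⟩).2 h0,
    hammingDist_one_add_left] at hρc
  have := hammingDist_le 0 c
  omega

theorem CompletelyRegular.sub_one_le_coveringRadius {C : Set (V n)} {δ : ℕ}
    (hcr : CompletelyRegular C) (hmin : IsMinDist C δ) (h0 : (0 : V n) ∈ C)
    (h1 : (1 : V n) ∉ C) : δ - 1 ≤ coveringRadius C := by
  have hC : C.Nonempty := ⟨0, h0⟩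
  set ρ := coveringRadius C
  by_contra! hρ
  have hρn := hcr.coveringRadius_add_le hmin h0 h1
  obtain ⟨α, hα⟩ := exists_distTo_eq_coveringRadius hC
  obtain ⟨ν, hν, -⟩ := exists_distTo_eq_of_le hC (μ := α) (i := (ρ + 1) / 2) (by omega)
  have hdesc := card_descents hmin.1 hC (ν := ν) (by omega)
  have hasc := card_ascents hmin.1 hC (ν := 1 + ν) (by rw [hcr.distTo_one_add h0 h1, hν]; omega)
  rw [← hcr.descents_eq_ascents_one_add h0 h1, hcr.distTo_one_add h0 h1, hν] at hasc
  omega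

theorem stmt_1_general {n δ : ℕ} (C : Set (V n)) (hcr : CompletelyRegular C)
    (hmin : IsMinDist C δ) (h0 : (0 : V n) ∈ C) (h1 : (1 : V n) ∉ C) :
    δ - 1 ≤ coveringRadius C ∧
    {α : V n | distTo C α = coveringRadius C} = (fun c : V n => 1 + c) '' C := by
  have hC : C.Nonempty := ⟨0, h0⟩
  refine ⟨hcr.sub_one_le_coveringRadius hmin h0 h1, Set.ext fun α => ⟨fun hα => ?_, ?_⟩⟩
  · refine ⟨1 + α, (distTo_eq_zero_iff hC).1 ?_, one_add_one_add α⟩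
    rw [hcr.distTo_one_add h0 h1, hα, Nat.sub_self]
  · rintro ⟨c, hc, rfl⟩
    rw [Set.mem_ofPred_eq, hcr.distTo_one_add h0 h1, (distTo_eq_zero_iff hC).2 hc, Nat.sub_zero]

/-- Lemma: a completely regular code with `δ ≥ 3`, `0 ∈ C`, `1 ∉ C` has covering radius
`ρ ≥ δ - 1` and `C_ρ = 1 + C`. -/
theorem stmt_1 {n δ : ℕ} (C : Set (V n)) (hcr : CompletelyRegular C)
    (hmin : IsMinDist C δ) (hδ : 3 ≤ δ) (h0 : (0 : V n) ∈ C) (h1 : (1 : V n) ∉ C) :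
    δ - 1 ≤ coveringRadius C ∧
    {α : V n | distTo C α = coveringRadius C} = (fun c : V n => 1 + c) '' C :=
  stmt_1_general C hcr hmin h0 h1
end

section
/- Let C be a completely regular code in F_2^n such that the all-zero vector 0 ∈ C and the all-one vector 1 ∉ C, and let i = d(1, C). Then C_i = 1 + C (the translate of C by the all-one vector). -/
lemma hd_flip {n : ℕ} (α β : V n) :
    hammingDist (1 + α) β + hammingDist α β = n := by
  classical
  have : ∀ j, ((1 + α) j ≠ β j) ↔ ¬ (α j ≠ β j) := by
    intro j
    have : ∀ a b : ZMod 2, (1 + a ≠ b) ↔ ¬ (a ≠ b) := by decide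
    simpa using this (α j) (β j)
  rw [hammingDist, hammingDist]
  simp only [Finset.filter_congr (fun j _ => this j)]
  rw [add_comm, Finset.card_filter_add_card_filter_not]
  simp

lemma distTo_zero {n : ℕ} {C : Set (V n)} {c : V n} (hc : c ∈ C) : distTo C c = 0 := by
  apply Nat.sInf_eq_zero.mpr
  exact Or.inl ⟨c, hc, hammingDist_self c⟩

lemma mem_image_iff_ncard {n : ℕ} (C : Set (V n)) (α : V n) (k : ℕ) :
    k ∈ hammingDist α '' C ↔ 0 < {β ∈ C | hammingDist α β = k}.ncard := by
  rw [Set.ncard_pos (Set.toFinite _)]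
  constructor
  · rintro ⟨β, hβ, hd⟩; exact ⟨β, hβ, hd⟩
  · rintro ⟨β, hβ, hd⟩; exact ⟨β, hβ, hd⟩


/-- If `C` is completely regular with `0 ∈ C`, `1 ∉ C`, and `i = d(1, C)`,
then `C_i = 1 + C`. -/
theorem stmt_2 {n : ℕ} (C : Set (V n)) (hcr : CompletelyRegular C)
    (h0 : (0 : V n) ∈ C) (h1 : (1 : V n) ∉ C) (i : ℕ) (hi : i = distTo C (1 : V n)) :
    {α : V n | distTo C α = i} = (fun c : V n => 1 + c) '' C := by
  classical
  have hCne : C.Nonempty := ⟨0, h0⟩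
  -- key counting: for c ∈ C, the distance distribution from 1 + c equals that from 1
  have key : ∀ c ∈ C, ∀ k : ℕ,
      {β ∈ C | hammingDist (1 + c) β = k}.ncard
        = {β ∈ C | hammingDist (1 : V n) β = k}.ncard := by
    intro c hc k
    have hset : ∀ γ : V n, {β ∈ C | hammingDist (1 + γ) β = k}
        = {β ∈ C | hammingDist γ β = n - k ∧ k ≤ n} := by
      intro γ
      ext β
      simp only [Set.mem_setOf_eq]
      constructor
      · rintro ⟨hβ, hd⟩
        have := hd_flip γ β
        exact ⟨hβ, by omega, by omega⟩
      · rintro ⟨hβ, hd, hk⟩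
        have := hd_flip γ β
        exact ⟨hβ, by omega⟩
    have h10 : {β ∈ C | hammingDist (1 : V n) β = k}
        = {β ∈ C | hammingDist (0 : V n) β = n - k ∧ k ≤ n} := by
      rw [show (1 : V n) = 1 + 0 from (add_zero _).symm]
      exact hset 0
    rw [hset c, h10]
    by_cases hk : k ≤ n
    · have e : ∀ γ : V n, {β ∈ C | hammingDist γ β = n - k ∧ k ≤ n}
          = {β ∈ C | hammingDist γ β = n - k} := by
        intro γ; ext β; simp [hk]
      rw [e c, e 0]
      exact hcr 0 (n - k) c 0 (distTo_zero hc) (distTo_zero h0)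
    · have e : ∀ γ : V n, {β ∈ C | hammingDist γ β = n - k ∧ k ≤ n} = ∅ := by
        intro γ; ext β; simp [hk]
      rw [e c, e 0]
  -- hence distTo C (1 + c) = distTo C 1 for c ∈ C
  have hdist : ∀ c ∈ C, distTo C (1 + c) = distTo C (1 : V n) := by
    intro c hc
    have himg : hammingDist (1 + c) '' C = hammingDist (1 : V n) '' C := by
      ext k
      rw [mem_image_iff_ncard, mem_image_iff_ncard, key c hc k]
    unfold distTo
    rw [himg]
  ext α
  simp only [Set.mem_setOf_eq, Set.mem_image]
  constructor
  · intro hα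
    -- count codewords at distance n from 1 : exactly {0}
    have h1set : {β ∈ C | hammingDist (1 : V n) β = n} = {0} := by
      ext β
      simp only [Set.mem_setOf_eq, Set.mem_singleton_iff]
      constructor
      · rintro ⟨hβ, hd⟩
        have := hd_flip (0 : V n) β
        rw [add_zero] at this
        have h0d : hammingDist (0 : V n) β = 0 := by omega
        exact (hammingDist_eq_zero.mp h0d).symm
      · rintro rfl
        refine ⟨h0, ?_⟩
        have := hd_flip (0 : V n) (0 : V n)
        rw [add_zero, hammingDist_self] at this
        omega
    have hcard : {β ∈ C | hammingDist α β = n}.ncard = 1 := by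
      rw [hcr i n α 1 hα hi.symm, h1set, Set.ncard_singleton]
    have hpos : 0 < {β ∈ C | hammingDist α β = n}.ncard := by omega
    rw [Set.ncard_pos (Set.toFinite _)] at hpos
    obtain ⟨β, hβ, hd⟩ := hpos
    refine ⟨β, hβ, ?_⟩
    have := hd_flip β α
    rw [hammingDist_comm β α, hd] at this
    have : hammingDist (1 + β) α = 0 := by omega
    exact (hammingDist_eq_zero.mp this)
  · rintro ⟨c, hc, rfl⟩
    rw [hdist c hc, hi]
end

section
/- Let C be a completely regular code in F_2^n with |C| > 1, containing the all-zero vector 0, whose minimum distance δ satisfies n/2 < δ < n. Then the all-one vector 1 is not in C. -/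
lemma dist_sum {n : ℕ} (β : V n) : hammingDist 0 β + hammingDist 1 β = n := by
  have h := Finset.card_filter_add_card_filter_not
    (s := (Finset.univ : Finset (Fin n))) (p := fun i => (0 : ZMod 2) ≠ β i)
  have hcongr : (Finset.univ.filter fun i => ¬ ((0 : ZMod 2) ≠ β i))
      = Finset.univ.filter fun i => (1 : ZMod 2) ≠ β i := by
    apply Finset.filter_congr
    intro i _
    generalize β i = x
    revert x; decide
  rw [hcongr] at h
  simpa [hammingDist] using h

/-- A completely regular code with `|C| > 1`, `0 ∈ C` and `n/2 < δ < n` does not contain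
the all-one vector. -/
theorem stmt_4 {n δ : ℕ} (C : Set (V n)) (hcr : CompletelyRegular C)
    (hcard : 1 < C.ncard) (h0 : (0 : V n) ∈ C) (hmin : IsMinDist C δ)
    (hlow : n < 2 * δ) (hhigh : δ < n) :
    (1 : V n) ∉ C := by
  intro h1
  obtain ⟨hlb, α, hα, β, hβ, hne, hd⟩ := hmin
  have h01n : hammingDist (0 : V n) (1 : V n) = n := by
    have := dist_sum (1 : V n)
    simpa [hammingDist_self] using this
  have hsub : ∀ γ ∈ C, γ = 0 ∨ γ = 1 := by
    intro γ hγ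
    by_contra hc
    push_neg at hc
    obtain ⟨hγ0, hγ1⟩ := hc
    have hd0 : δ ≤ hammingDist 0 γ := hlb _ h0 _ hγ (Ne.symm hγ0)
    have hd1 : δ ≤ hammingDist 1 γ := hlb _ h1 _ hγ (Ne.symm hγ1)
    have hsum := dist_sum γ
    omega
  rcases hsub α hα with h | h <;> rcases hsub β hβ with h' | h' <;>
    subst h <;> subst h' <;> try exact hne rfl
  · omega
  · rw [hammingDist_comm] at hd
    omega
end

section
/- Let C be a completely regular code in F_2^n with |C| > 1, containing the all-zero vector 0, whose minimum distance δ satisfies δ > max(2, n/2) and δ < n. Then n is odd and δ = (n+1)/2. -/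
set_option linter.unusedSectionVars false
set_option linter.unusedVariables false

section CRaux
open Finset

variable {n : ℕ}

/-- difference set of two vertices -/
def Df (x y : V n) : Finset (Fin n) := {j | x j ≠ y j}

lemma hd_eq (x y : V n) : hammingDist x y = (Df x y).card := rfl

lemma Df_comm (x y : V n) : Df x y = Df y x := by
  ext j; simp [Df, ne_comm]

lemma Df_symmDiff (x y z : V n) : Df x z = symmDiff (Df x y) (Df y z) := by
  ext j
  simp only [Df, mem_filter, mem_univ, true_and, Finset.mem_symmDiff]
  have : ∀ a b c : ZMod 2, (a ≠ c ↔ (a ≠ b ∧ ¬ b ≠ c) ∨ (b ≠ c ∧ ¬ a ≠ b)) := by decide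
  exact this _ _ _

def chi (T : Finset (Fin n)) : V n := fun j => if j ∈ T then 1 else 0

lemma Df_add_chi (γ : V n) (T : Finset (Fin n)) : Df (γ + chi T) γ = T := by
  ext j
  have h1 : ∀ a : ZMod 2, a + 1 ≠ a := by decide
  simp only [Df, mem_filter, mem_univ, true_and, Pi.add_apply, chi]
  by_cases hj : j ∈ T <;> simp [hj, h1]

lemma card_symmDiff (s t : Finset (Fin n)) :
    (symmDiff s t).card + (s ∩ t).card + (s ∩ t).card = s.card + t.card := by
  have h1 : (symmDiff s t).card = (s \ t).card + (t \ s).card := by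
    rw [symmDiff_def, Finset.sup_eq_union]
    exact Finset.card_union_of_disjoint (disjoint_sdiff_sdiff)
  have h2 := Finset.card_sdiff_add_card_inter s t
  have h3 := Finset.card_sdiff_add_card_inter t s
  rw [Finset.inter_comm t s] at h3
  omega

lemma Df_zero_right (x : V n) : Df (0 : V n) x = {j | x j ≠ 0} := by
  ext j; simp [Df, eq_comm]

/-! distTo lemmas -/

lemma distTo_le {C : Set (V n)} {α β : V n} (hβ : β ∈ C) :
    distTo C α ≤ hammingDist α β :=
  Nat.sInf_le ⟨β, hβ, rfl⟩

lemma distTo_eq {C : Set (V n)} {α : V n} {i : ℕ}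
    (h1 : ∃ β ∈ C, hammingDist α β = i) (h2 : ∀ β ∈ C, i ≤ hammingDist α β) :
    distTo C α = i := by
  obtain ⟨β, hβ, hd⟩ := h1
  refine le_antisymm (hd ▸ distTo_le hβ) ?_
  refine le_csInf ⟨_, β, hβ, rfl⟩ ?_
  rintro b ⟨β', hβ', rfl⟩
  exact h2 β' hβ'

lemma distTo_of_mem {C : Set (V n)} {α : V n} (h : α ∈ C) : distTo C α = 0 :=
  distTo_eq ⟨α, h, by simp⟩ (fun _ _ => Nat.zero_le _)

end CRaux


section FlipLemmas
open Finset

variable {n δ : ℕ}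

lemma flip_mem_iff {C : Set (V n)} (hmin1 : ∀ α ∈ C, ∀ β ∈ C, α ≠ β → δ ≤ hammingDist α β)
    {γ β : V n} (hγ : γ ∈ C) (hβ : β ∈ C) {T : Finset (Fin n)}
    (h2t : 2 * T.card ≤ δ) (hne : β ≠ γ) :
    hammingDist (γ + chi T) β = δ - T.card ↔ (hammingDist γ β = δ ∧ T ⊆ Df γ β) := by
  have hΔ : δ ≤ (Df γ β).card := by
    rw [← hd_eq]; exact hmin1 γ hγ β hβ (Ne.symm hne)
  have hDf : Df (γ + chi T) β = symmDiff T (Df γ β) := by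
    rw [Df_symmDiff (γ + chi T) γ β, Df_add_chi]
  have hcs := card_symmDiff T (Df γ β)
  have hint : (T ∩ Df γ β).card ≤ T.card := Finset.card_le_card Finset.inter_subset_left
  rw [hd_eq, hDf, hd_eq]
  constructor
  · intro h
    have hcardΔ : (Df γ β).card = δ ∧ (T ∩ Df γ β).card = T.card := by omega
    refine ⟨hcardΔ.1, ?_⟩
    have : T ∩ Df γ β = T :=
      Finset.eq_of_subset_of_card_le Finset.inter_subset_left (le_of_eq hcardΔ.2.symm)
    rw [← this]; exact Finset.inter_subset_right
  · rintro ⟨hc, hsub⟩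
    have : T ∩ Df γ β = T := Finset.inter_eq_left.mpr hsub
    rw [this] at hcs
    omega

lemma distTo_flip {C : Set (V n)} (hmin1 : ∀ α ∈ C, ∀ β ∈ C, α ≠ β → δ ≤ hammingDist α β)
    {γ : V n} (hγ : γ ∈ C) {T : Finset (Fin n)} (h2t : 2 * T.card ≤ δ) :
    distTo C (γ + chi T) = T.card := by
  have hdγ : hammingDist (γ + chi T) γ = T.card := by rw [hd_eq, Df_add_chi]
  refine distTo_eq ⟨γ, hγ, hdγ⟩ ?_
  intro β hβ
  rcases eq_or_ne β γ with rfl | hne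
  · omega
  · have hΔ : δ ≤ (Df γ β).card := by
      rw [← hd_eq]; exact hmin1 γ hγ β hβ (Ne.symm hne)
    have hDf : Df (γ + chi T) β = symmDiff T (Df γ β) := by
      rw [Df_symmDiff (γ + chi T) γ β, Df_add_chi]
    have hcs := card_symmDiff T (Df γ β)
    have hint : (T ∩ Df γ β).card ≤ T.card := Finset.card_le_card Finset.inter_subset_left
    rw [hd_eq, hDf]
    omega

noncomputable def CFin (C : Set (V n)) : Finset (V n) := (Set.toFinite C).toFinset

lemma mem_CFin {C : Set (V n)} {β : V n} : β ∈ CFin C ↔ β ∈ C := Set.Finite.mem_toFinset _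

lemma ncard_filter (C : Set (V n)) (P : V n → Prop) [DecidablePred P] :
    {β ∈ C | P β}.ncard = ((CFin C).filter P).card := by
  rw [← Set.ncard_coe_finset]
  congr 1
  ext β
  simp [mem_CFin, Set.mem_setOf_eq]

lemma count_flip {C : Set (V n)} (hmin1 : ∀ α ∈ C, ∀ β ∈ C, α ≠ β → δ ≤ hammingDist α β)
    {γ : V n} (hγ : γ ∈ C) {T : Finset (Fin n)} (hT : T.Nonempty)
    (h2t : 2 * T.card ≤ δ) :
    ((CFin C).filter (fun β => hammingDist (γ + chi T) β = δ - T.card)).card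
      = ((CFin C).filter (fun β => hammingDist γ β = δ ∧ T ⊆ Df γ β)).card
        + (if 2 * T.card = δ then 1 else 0) := by
  classical
  have htpos : 0 < T.card := Finset.card_pos.mpr hT
  have hdγ : hammingDist (γ + chi T) γ = T.card := by rw [hd_eq, Df_add_chi]
  have hγnot : ¬ (hammingDist γ γ = δ ∧ T ⊆ Df γ γ) := by
    rintro ⟨h1, -⟩
    simp [hammingDist_self] at h1
    omega
  by_cases heq : 2 * T.card = δ
  · rw [if_pos heq]
    have hmemγ : γ ∈ (CFin C).filter
        (fun β => hammingDist (γ + chi T) β = δ - T.card) := by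
      rw [Finset.mem_filter, mem_CFin]
      exact ⟨hγ, by omega⟩
    have hset : (CFin C).filter (fun β => hammingDist (γ + chi T) β = δ - T.card)
        = insert γ ((CFin C).filter
            (fun β => hammingDist γ β = δ ∧ T ⊆ Df γ β)) := by
      ext β
      rcases eq_or_ne β γ with rfl | hne
      · simp only [Finset.mem_insert, true_or, iff_true]; exact hmemγ
      · simp only [Finset.mem_insert, hne, false_or, Finset.mem_filter, mem_CFin]
        constructor
        · rintro ⟨h1, h2⟩
          exact ⟨h1, (flip_mem_iff hmin1 hγ h1 h2t hne).mp h2⟩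
        · rintro ⟨h1, h2⟩
          exact ⟨h1, (flip_mem_iff hmin1 hγ h1 h2t hne).mpr h2⟩
    rw [hset, Finset.card_insert_of_notMem]
    rw [Finset.mem_filter]
    rintro ⟨-, h⟩
    exact hγnot h
  · rw [if_neg heq, Nat.add_zero]
    congr 1
    ext β
    simp only [Finset.mem_filter, mem_CFin]
    rcases eq_or_ne β γ with rfl | hne
    · constructor
      · rintro ⟨-, h⟩; omega
      · rintro ⟨-, h⟩; exact absurd h hγnot
    · exact and_congr_right fun h1 => flip_mem_iff hmin1 hγ h1 h2t hne

end FlipLemmas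

section Fisher
open Finset

lemma fisher_ineq {m : ℕ} {α : Type*} [DecidableEq α] (B : Finset α)
    (S : α → Finset (Fin m)) (c h : ℕ) (hch : h < c)
    (h1 : ∀ j, (B.filter fun β => j ∈ S β).card = c)
    (h2 : ∀ j l, j ≠ l → (B.filter fun β => j ∈ S β ∧ l ∈ S β).card = h) :
    m ≤ B.card := by
  classical
  set p : Fin m → (↥B → ℝ) := fun j β => if j ∈ S β.1 then 1 else 0 with hp
  have gram : ∀ i k : Fin m, ∑ β : ↥B, p i β * p k β
      = if i = k then (c : ℝ) else (h : ℝ) := by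
    intro i k
    have e1 : ∑ β : ↥B, p i β * p k β
        = ∑ β ∈ B, (if (i ∈ S β ∧ k ∈ S β) then (1:ℝ) else 0) := by
      rw [← Finset.sum_coe_sort B]
      refine Finset.sum_congr rfl fun β _ => ?_
      simp only [hp]
      split_ifs with h1' h2' h3' <;> simp_all
    rw [e1, Finset.sum_boole]
    rcases eq_or_ne i k with rfl | hik
    · rw [if_pos rfl, ← h1 i]
      norm_cast
      congr 1
      simp
    · rw [if_neg hik, ← h2 i k hik]
  have hli : LinearIndependent ℝ p := by
    rw [Fintype.linearIndependent_iff]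
    intro g hg
    have hzero : ∀ β : ↥B, ∑ i, g i * p i β = 0 := by
      intro β
      have := congrFun hg β
      simpa using this
    have expand : ∑ β : ↥B, (∑ i, g i * p i β) * (∑ k, g k * p k β)
        = ∑ i, ∑ k, (g i * g k) * ∑ β : ↥B, p i β * p k β := by
      simp_rw [Finset.sum_mul_sum]
      rw [Finset.sum_comm]
      refine Finset.sum_congr rfl fun i _ => ?_
      rw [Finset.sum_comm]
      refine Finset.sum_congr rfl fun k _ => ?_
      rw [Finset.mul_sum]
      refine Finset.sum_congr rfl fun β _ => ?_
      ring
    have key : (0:ℝ) = ((c:ℝ) - h) * (∑ i, g i * g i)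
        + (h:ℝ) * ((∑ i, g i) * (∑ i, g i)) := by
      have e0 : (0:ℝ) = ∑ β : ↥B, (∑ i, g i * p i β) * (∑ k, g k * p k β) := by
        simp [hzero]
      rw [e0, expand]
      simp_rw [gram]
      have e2 : ∀ i : Fin m, ∑ k, (g i * g k) * (if i = k then (c:ℝ) else h)
          = (g i * g i) * ((c:ℝ) - h) + ∑ k, (g i * g k) * (h:ℝ) := by
        intro i
        have e3 : ∀ k : Fin m, (g i * g k) * (if i = k then (c:ℝ) else h)
            = (if i = k then (g i * g k) * ((c:ℝ) - h) else 0) + (g i * g k) * h := by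
          intro k; split_ifs <;> ring
        simp_rw [e3, Finset.sum_add_distrib, Finset.sum_ite_eq]
        simp
      simp_rw [e2, Finset.sum_add_distrib]
      rw [← Finset.sum_mul]
      have e4 : ∑ i, ∑ k, (g i * g k) * (h:ℝ)
          = (h:ℝ) * ((∑ i, g i) * (∑ i, g i)) := by
        rw [Finset.sum_mul_sum]
        simp_rw [Finset.mul_sum]
        refine Finset.sum_congr rfl fun i _ => Finset.sum_congr rfl fun k _ => ?_
        ring
      rw [e4]
      ring
    have hsqsum : ∑ i, g i * g i = 0 := by
      have t1 : (0:ℝ) ≤ ∑ i, g i * g i :=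
        Finset.sum_nonneg fun i _ => mul_self_nonneg _
      have t2 : (0:ℝ) ≤ (∑ i, g i) * (∑ i, g i) := mul_self_nonneg _
      have t3 : (h:ℝ) < c := by exact_mod_cast hch
      have t4 : (0:ℝ) ≤ h := Nat.cast_nonneg h
      nlinarith
    intro j
    have hj : g j * g j = 0 :=
      (Finset.sum_eq_zero_iff_of_nonneg
        (fun i _ => mul_self_nonneg (g i))).mp hsqsum j (Finset.mem_univ j)
    exact mul_self_eq_zero.mp hj
  have hc := hli.fintype_card_le_finrank
  rw [Module.finrank_fintype_fun_eq_card] at hc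
  simpa [Fintype.card_coe] using hc

end Fisher

section DoubleCount
open Finset

variable {n : ℕ} {α : Type*} [DecidableEq α]

lemma dc1 (B : Finset α) (S : α → Finset (Fin n)) (J : Finset (Fin n)) :
    ∑ j ∈ J, (B.filter fun β => j ∈ S β).card = ∑ β ∈ B, (J ∩ S β).card := by
  classical
  simp_rw [Finset.card_filter]
  rw [Finset.sum_comm]
  refine Finset.sum_congr rfl fun β _ => ?_
  rw [← Finset.card_filter, Finset.filter_mem_eq_inter]

lemma dc2 (B : Finset α) (S : α → Finset (Fin n)) (J : Finset (Fin n)) :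
    ∑ j ∈ J, ∑ l ∈ J.erase j, (B.filter fun β => j ∈ S β ∧ l ∈ S β).card
      = ∑ β ∈ B, (J ∩ S β).card * ((J ∩ S β).card - 1) := by
  classical
  simp_rw [Finset.card_filter]
  have swap1 : ∀ j ∈ J, ∑ l ∈ J.erase j, ∑ β ∈ B, (if j ∈ S β ∧ l ∈ S β then 1 else 0)
      = ∑ β ∈ B, ∑ l ∈ J.erase j, (if j ∈ S β ∧ l ∈ S β then 1 else 0) :=
    fun j _ => Finset.sum_comm
  rw [Finset.sum_congr rfl swap1, Finset.sum_comm]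
  refine Finset.sum_congr rfl fun β _ => ?_
  have inner : ∀ j, ∑ l ∈ J.erase j, (if j ∈ S β ∧ l ∈ S β then 1 else 0)
      = if j ∈ S β then ((J ∩ S β).erase j).card else 0 := by
    intro j
    by_cases hj : j ∈ S β
    · simp only [hj, true_and, if_true]
      rw [← Finset.card_filter, Finset.filter_mem_eq_inter, Finset.erase_inter]
    · simp [hj]
  simp_rw [inner]
  rw [← Finset.sum_filter, Finset.filter_mem_eq_inter]
  have : ∀ j ∈ J ∩ S β, ((J ∩ S β).erase j).card = (J ∩ S β).card - 1 :=
    fun j hj => Finset.card_erase_of_mem hj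
  rw [Finset.sum_congr rfl this, Finset.sum_const, smul_eq_mul]

end DoubleCount

set_option maxHeartbeats 1000000 in
/-- A completely regular code with `|C| > 1`, `0 ∈ C` and `max(2, n/2) < δ < n` forces
`n` odd and `δ = (n+1)/2`. -/
theorem stmt_5 {n δ : ℕ} (C : Set (V n)) (hcr : CompletelyRegular C)
    (hcard : 1 < C.ncard) (h0 : (0 : V n) ∈ C) (hmin : IsMinDist C δ)
    (hδ2 : 2 < δ) (hlow : n < 2 * δ) (hhigh : δ < n) :
    Odd n ∧ 2 * δ = n + 1 := by
  classical
  obtain ⟨hmin1, α₀, hα₀, β₀, hβ₀, hne₀, hd₀⟩ := hmin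
  have main : ¬ (n + 2 ≤ 2 * δ) := by
    intro hbig
    have hnpos : 0 < n := by omega
    -- Finset version of complete regularity
    have hcr' : ∀ (i k : ℕ) (ν μ : V n), distTo C ν = i → distTo C μ = i →
        ((CFin C).filter fun β => hammingDist ν β = k).card
          = ((CFin C).filter fun β => hammingDist μ β = k).card := by
      intro i k ν μ h1 h2
      have := hcr i k ν μ h1 h2
      rwa [ncard_filter, ncard_filter] at this
    -- a codeword at distance δ from 0
    obtain ⟨w, hw, hdw⟩ : ∃ w ∈ C, hammingDist (0 : V n) w = δ := by
      have e := hcr' 0 δ α₀ 0 (distTo_of_mem hα₀) (distTo_of_mem h0)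
      have hne : ((CFin C).filter fun β => hammingDist α₀ β = δ).Nonempty :=
        ⟨β₀, Finset.mem_filter.mpr ⟨mem_CFin.mpr hβ₀, hd₀⟩⟩
      have hpos : 0 < ((CFin C).filter fun β => hammingDist (0:V n) β = δ).card := by
        rw [← e]; exact Finset.card_pos.mpr hne
      obtain ⟨w, hwmem⟩ := Finset.card_pos.mp hpos
      rw [Finset.mem_filter, mem_CFin] at hwmem
      exact ⟨w, hwmem.1, hwmem.2⟩
    have hS₀card : (Df w (0:V n)).card = δ := by
      rw [← hd_eq, hammingDist_comm]; exact hdw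
    set B : Finset (V n) := (CFin C).filter (fun β => hammingDist w β = δ) with hB
    have h0B : (0 : V n) ∈ B :=
      Finset.mem_filter.mpr ⟨mem_CFin.mpr h0, by rwa [hammingDist_comm]⟩
    -- counts N γ T
    have hNeq : ∀ γ₁ ∈ C, ∀ γ₂ ∈ C, ∀ T₁ T₂ : Finset (Fin n),
        T₁.Nonempty → T₁.card = T₂.card → 2 * T₁.card ≤ δ →
        ((CFin C).filter (fun β => hammingDist γ₁ β = δ ∧ T₁ ⊆ Df γ₁ β)).card
          = ((CFin C).filter (fun β => hammingDist γ₂ β = δ ∧ T₂ ⊆ Df γ₂ β)).card := by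
      intro γ₁ hγ₁ γ₂ hγ₂ T₁ T₂ hT₁ hcards h2t
      have hT₂ : T₂.Nonempty := Finset.card_pos.mp (hcards ▸ Finset.card_pos.mpr hT₁)
      have e1 := count_flip hmin1 hγ₁ hT₁ h2t
      have e2 := count_flip hmin1 hγ₂ hT₂ (hcards ▸ h2t)
      have d1 := distTo_flip hmin1 hγ₁ h2t
      have d2 := distTo_flip hmin1 hγ₂ (hcards ▸ h2t)
      have e := hcr' T₁.card (δ - T₁.card) (γ₁ + chi T₁) (γ₂ + chi T₂) d1
        (by rw [d2, hcards])
      rw [← hcards] at e2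
      omega
    -- choose coordinates
    obtain ⟨j₀, hj₀⟩ : (Df w (0:V n)).Nonempty :=
      Finset.card_pos.mp (by omega)
    obtain ⟨jout, hjout⟩ : ∃ jout, jout ∉ Df w (0:V n) := by
      by_contra hcon; push_neg at hcon
      have : Df w (0:V n) = Finset.univ := Finset.eq_univ_iff_forall.mpr hcon
      rw [this, Finset.card_univ, Fintype.card_fin] at hS₀card
      omega
    have hj₀out : j₀ ≠ jout := fun h => hjout (h ▸ hj₀)
    set c : ℕ := ((CFin C).filter
      (fun β => hammingDist w β = δ ∧ {j₀} ⊆ Df w β)).card with hc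
    have hcall : ∀ γ ∈ C, ∀ j : Fin n,
        ((CFin C).filter (fun β => hammingDist γ β = δ ∧ {j} ⊆ Df γ β)).card = c :=
      fun γ hγ j => hNeq γ hγ w hw {j} {j₀} (Finset.singleton_nonempty j)
        (by simp) (by simp; omega)
    have hcpos : 1 ≤ c := by
      have hmem : w ∈ (CFin C).filter
          (fun β => hammingDist (0:V n) β = δ ∧ {j₀} ⊆ Df (0:V n) β) := by
        rw [Finset.mem_filter, mem_CFin]
        refine ⟨hw, hdw, ?_⟩
        rw [Finset.singleton_subset_iff, Df_comm]
        exact hj₀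
      have h1 : 0 < ((CFin C).filter
          (fun β => hammingDist (0:V n) β = δ ∧ {j₀} ⊆ Df (0:V n) β)).card :=
        Finset.card_pos.mpr ⟨w, hmem⟩
      rw [hcall (0:V n) h0 j₀] at h1
      omega
    -- 3δ ≤ 2n
    have h3δ : 3 * δ ≤ 2 * n := by
      have h1 : 0 < ((CFin C).filter
          (fun β => hammingDist w β = δ ∧ {jout} ⊆ Df w β)).card := by
        rw [hcall w hw jout]; omega
      obtain ⟨β, hβmem⟩ := Finset.card_pos.mp h1
      rw [Finset.mem_filter, mem_CFin, Finset.singleton_subset_iff] at hβmem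
      obtain ⟨hβC, hdβ, hsubβ⟩ := hβmem
      have hβ0 : β ≠ 0 := by rintro rfl; exact hjout hsubβ
      have hwtβ : δ ≤ (Df (0:V n) β).card := by
        rw [← hd_eq]
        exact hmin1 (0:V n) h0 β hβC (fun h => hβ0 h.symm)
      have hsd : Df (0:V n) β = symmDiff (Df w (0:V n)) (Df w β) := by
        rw [Df_symmDiff (0:V n) w β, Df_comm (0:V n) w]
      have hcs := card_symmDiff (Df w (0:V n)) (Df w β)
      have huni := Finset.card_union_add_card_inter (Df w (0:V n)) (Df w β)
      have hle : (Df w (0:V n) ∪ Df w β).card ≤ n := by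
        calc (Df w (0:V n) ∪ Df w β).card ≤ Finset.univ.card := Finset.card_le_univ _
        _ = n := by rw [Finset.card_univ, Fintype.card_fin]
      have hSβcard : (Df w β).card = δ := by rw [← hd_eq]; exact hdβ
      rw [hsd] at hwtβ
      omega
    have hδ4 : 4 ≤ δ := by omega
    -- pair counts
    set hP : ℕ := ((CFin C).filter
      (fun β => hammingDist w β = δ ∧ {j₀, jout} ⊆ Df w β)).card with hhP
    have hpair : ∀ γ ∈ C, ∀ j l : Fin n, j ≠ l →
        ((CFin C).filter (fun β => hammingDist γ β = δ ∧ {j, l} ⊆ Df γ β)).card = hP :=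
      fun γ hγ j l hjl => hNeq γ hγ w hw {j, l} {j₀, jout} ⟨j, by simp⟩
        (by rw [Finset.card_pair hjl, Finset.card_pair hj₀out])
        (by rw [Finset.card_pair hjl]; omega)
    -- B-level identifications
    have hptB : ∀ j : Fin n, (B.filter fun β => j ∈ Df w β).card = c := by
      intro j
      rw [← hcall w hw j, hB, Finset.filter_filter]
      congr 1
      apply Finset.filter_congr
      intro β _
      simp [Finset.singleton_subset_iff]
    have hprB : ∀ j l : Fin n, j ≠ l →
        (B.filter fun β => j ∈ Df w β ∧ l ∈ Df w β).card = hP := by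
      intro j l hjl
      rw [← hpair w hw j l hjl, hB, Finset.filter_filter]
      congr 1
      apply Finset.filter_congr
      intro β _
      simp [Finset.insert_subset_iff, Finset.singleton_subset_iff]
    have hcardB : ∀ β ∈ B, (Df w β).card = δ := by
      intro β hβ
      rw [hB, Finset.mem_filter] at hβ
      rw [← hd_eq]
      exact hβ.2
    -- E1
    have E1 : n * c = B.card * δ := by
      have hdc := dc1 B (fun β => Df w β) Finset.univ
      have lhs : ∑ j ∈ Finset.univ, (B.filter fun β => j ∈ Df w β).card = n * c := by
        rw [Finset.sum_congr rfl (fun j _ => hptB j), Finset.sum_const, smul_eq_mul,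
          Finset.card_univ, Fintype.card_fin]
      have rhs : ∑ β ∈ B, (Finset.univ ∩ Df w β).card = B.card * δ := by
        rw [Finset.sum_congr rfl (fun β hβ => by
          rw [Finset.univ_inter, hcardB β hβ]), Finset.sum_const, smul_eq_mul]
      rw [← lhs, hdc, rhs]
    -- E2
    have E2 : n * ((n - 1) * hP) = B.card * (δ * (δ - 1)) := by
      have hdc := dc2 B (fun β => Df w β) Finset.univ
      have lhs : ∑ j ∈ Finset.univ,
          ∑ l ∈ Finset.univ.erase j, (B.filter fun β => j ∈ Df w β ∧ l ∈ Df w β).card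
          = n * ((n - 1) * hP) := by
        rw [Finset.sum_congr rfl (fun j _ => ?_), Finset.sum_const, smul_eq_mul,
          Finset.card_univ, Fintype.card_fin]
        rw [Finset.sum_congr rfl (fun l hl =>
            hprB j l (Finset.ne_of_mem_erase hl).symm),
          Finset.sum_const, smul_eq_mul,
          Finset.card_erase_of_mem (Finset.mem_univ j), Finset.card_univ,
          Fintype.card_fin]
      have rhs : ∑ β ∈ B, (Finset.univ ∩ Df w β).card * ((Finset.univ ∩ Df w β).card - 1)
          = B.card * (δ * (δ - 1)) := by
        rw [Finset.sum_congr rfl (fun β hβ => by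
          rw [Finset.univ_inter, hcardB β hβ]), Finset.sum_const, smul_eq_mul]
      rw [← lhs, hdc, rhs]
    -- E3
    have E3 : δ * c = ∑ β ∈ B, (Df w (0:V n) ∩ Df w β).card := by
      have hdc := dc1 B (fun β => Df w β) (Df w (0:V n))
      rw [← hdc, Finset.sum_congr rfl (fun j _ => hptB j), Finset.sum_const,
        smul_eq_mul, hS₀card]
    -- E4
    have E4 : δ * ((δ - 1) * hP)
        = ∑ β ∈ B, (Df w (0:V n) ∩ Df w β).card * ((Df w (0:V n) ∩ Df w β).card - 1) := by
      have hdc := dc2 B (fun β => Df w β) (Df w (0:V n))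
      rw [← hdc, Finset.sum_congr rfl (fun j hj => ?_), Finset.sum_const, smul_eq_mul,
        hS₀card]
      rw [Finset.sum_congr rfl (fun l hl => hprB j l (Finset.ne_of_mem_erase hl).symm),
        Finset.sum_const, smul_eq_mul, Finset.card_erase_of_mem hj, hS₀card]
    -- (n-1) * hP = c * (δ-1)
    have hrel : (n - 1) * hP = c * (δ - 1) := by
      have h1 : n * ((n - 1) * hP) = n * (c * (δ - 1)) := by
        rw [E2]
        calc B.card * (δ * (δ - 1)) = (B.card * δ) * (δ - 1) := by ring
        _ = (n * c) * (δ - 1) := by rw [E1]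
        _ = n * (c * (δ - 1)) := by ring
      exact Nat.eq_of_mul_eq_mul_left hnpos h1
    -- hP < c
    have hPltc : hP < c := by
      by_contra hcon
      push_neg at hcon
      have t1 : (n - 1) * c ≤ (n - 1) * hP := Nat.mul_le_mul_left _ hcon
      rw [hrel] at t1
      have t2 : δ * c ≤ (n - 1) * c := Nat.mul_le_mul_right _ (by omega)
      have t3 : c * (δ - 1) + c = c * δ := by
        have h5 : δ - 1 + 1 = δ := by omega
        calc c * (δ - 1) + c = c * ((δ - 1) + 1) := by ring
        _ = c * δ := by rw [h5]
      linarith only [t1, t2, t3, hcpos]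
    -- Fisher's inequality
    have hfish : n ≤ B.card := fisher_ineq B (fun β => Df w β) c hP hPltc hptB hprB
    have hcgeδ : δ ≤ c := by
      have t1 : n * δ ≤ B.card * δ := Nat.mul_le_mul_right δ hfish
      rw [← E1] at t1
      exact Nat.le_of_mul_le_mul_left t1 hnpos
    -- intersection bound for β ≠ 0
    have hxb : ∀ β ∈ B, β ≠ (0:V n) → 2 * ((Df w (0:V n) ∩ Df w β)).card ≤ δ := by
      intro β hβB hβ0
      have hβC : β ∈ C := mem_CFin.mp (Finset.mem_filter.mp hβB).1
      have hdβ : hammingDist w β = δ := (Finset.mem_filter.mp hβB).2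
      have hwtβ : δ ≤ (Df (0:V n) β).card := by
        rw [← hd_eq]
        exact hmin1 (0:V n) h0 β hβC (fun h => hβ0 h.symm)
      have hsd : Df (0:V n) β = symmDiff (Df w (0:V n)) (Df w β) := by
        rw [Df_symmDiff (0:V n) w β, Df_comm (0:V n) w]
      have hcs := card_symmDiff (Df w (0:V n)) (Df w β)
      have hSβcard : (Df w β).card = δ := by rw [← hd_eq]; exact hdβ
      rw [hsd] at hwtβ
      omega
    -- split sums at β = 0
    have hx0 : (Df w (0:V n) ∩ Df w (0:V n)).card = δ := by
      rw [Finset.inter_self, hS₀card]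
    have E3' : δ * c = δ + ∑ β ∈ B.erase 0, (Df w (0:V n) ∩ Df w β).card := by
      rw [E3, ← Finset.add_sum_erase B _ h0B, hx0]
    have E4' : δ * ((δ - 1) * hP)
        = δ * (δ - 1) + ∑ β ∈ B.erase 0,
            (Df w (0:V n) ∩ Df w β).card * ((Df w (0:V n) ∩ Df w β).card - 1) := by
      rw [E4, ← Finset.add_sum_erase B _ h0B, hx0]
    set Q : ℕ := ∑ β ∈ B.erase 0, (Df w (0:V n) ∩ Df w β).card with hQdef
    set P : ℕ := ∑ β ∈ B.erase 0,
      (Df w (0:V n) ∩ Df w β).card * ((Df w (0:V n) ∩ Df w β).card - 1) with hPdef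
    have hPQ : 2 * P ≤ (δ - 2) * Q := by
      rw [hPdef, hQdef, Finset.mul_sum, Finset.mul_sum]
      refine Finset.sum_le_sum fun β hβ => ?_
      have h2x := hxb β (Finset.mem_of_mem_erase hβ) (Finset.ne_of_mem_erase hβ)
      have key : ∀ x : ℕ, 2 * x ≤ δ → 2 * (x * (x - 1)) ≤ (δ - 2) * x := by
        intro x hx
        rcases x with _ | z
        · simp
        · have hz : 2 * z ≤ δ - 2 := by omega
          calc 2 * ((z+1) * ((z+1) - 1)) = (z+1) * (2 * z) := by
                simp only [Nat.add_sub_cancel]; ring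
          _ ≤ (z+1) * (δ - 2) := Nat.mul_le_mul_left _ hz
          _ = (δ - 2) * (z+1) := Nat.mul_comm _ _
      exact key _ h2x
    -- move to the integers
    have f1 : (δ:ℤ) * (((δ:ℤ) - 1) * (hP:ℤ)) = (δ:ℤ) * ((δ:ℤ) - 1) + (P:ℤ) := by
      zify [show 1 ≤ δ by omega] at E4'
      linarith only [E4']
    have f2 : (δ:ℤ) * (c:ℤ) = (δ:ℤ) + (Q:ℤ) := by exact_mod_cast E3'
    have f3 : 2 * (P:ℤ) ≤ ((δ:ℤ) - 2) * (Q:ℤ) := by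
      zify [show 2 ≤ δ by omega] at hPQ
      linarith only [hPQ]
    have f4 : ((n:ℤ) - 1) * (hP:ℤ) = (c:ℤ) * ((δ:ℤ) - 1) := by
      zify [show 1 ≤ δ by omega, show 1 ≤ n by omega] at hrel
      linarith only [hrel]
    have hdz : (4:ℤ) ≤ (δ:ℤ) := by exact_mod_cast hδ4
    have hnz : (δ:ℤ) < (n:ℤ) := by exact_mod_cast hhigh
    have hbz : (n:ℤ) + 2 ≤ 2 * (δ:ℤ) := by exact_mod_cast hbig
    have hcz : (δ:ℤ) ≤ (c:ℤ) := by exact_mod_cast hcgeδ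
    have hHz : (0:ℤ) ≤ (hP:ℤ) := Int.natCast_nonneg _
    have g2 : ((δ:ℤ) - 2) * ((δ:ℤ) * (c:ℤ)) = ((δ:ℤ) - 2) * ((δ:ℤ) + (Q:ℤ)) := by
      rw [f2]
    have s0 : (δ:ℤ) * (2 * (((δ:ℤ) - 1) * (hP:ℤ)))
        ≤ (δ:ℤ) * ((δ:ℤ) + ((δ:ℤ) - 2) * (c:ℤ)) := by linarith only [f1, f3, g2]
    have s1 : 2 * (((δ:ℤ) - 1) * (hP:ℤ)) ≤ (δ:ℤ) + ((δ:ℤ) - 2) * (c:ℤ) :=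
      le_of_mul_le_mul_left s0 (by linarith only [hdz])
    have s2 : (c:ℤ) * ((δ:ℤ) - 1) ≤ (2 * (δ:ℤ) - 3) * (hP:ℤ) := by
      rw [← f4]
      exact mul_le_mul_of_nonneg_right (by linarith only [hbz]) hHz
    have s3 : (3 * (δ:ℤ) - 4) * (c:ℤ) ≤ (2 * (δ:ℤ) - 3) * (δ:ℤ) := by
      have t1 := mul_le_mul_of_nonneg_left s1 (show (0:ℤ) ≤ 2 * (δ:ℤ) - 3 by linarith only [hdz])
      have t2 := mul_le_mul_of_nonneg_left s2 (show (0:ℤ) ≤ 2 * ((δ:ℤ) - 1) by linarith only [hdz])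
      linarith only [t1, t2]
    have p1 : (3 * (δ:ℤ) - 4) * (δ:ℤ) ≤ (3 * (δ:ℤ) - 4) * (c:ℤ) :=
      mul_le_mul_of_nonneg_left hcz (by linarith only [hdz])
    have p2 : 4 * (δ:ℤ) ≤ (δ:ℤ) * (δ:ℤ) :=
      mul_le_mul_of_nonneg_right hdz (by linarith only [hdz])
    linarith only [s3, p1, p2, hdz]
  refine ⟨⟨δ - 1, by omega⟩, by omega⟩
end

section
/- Let C be a completely regular code in F_2^n with |C| > 1, containing the all-zero vector 0, whose minimum distance δ satisfies δ > max(2, n/2) and δ < n. Then every nonzero codeword of C has weight exactly δ; that is, C = {0} ∪ C(δ), where C(δ) is the set of codewords of weight δ. -/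
open Finset

def eb {n : ℕ} (j : Fin n) : V n := fun i => if i = j then 1 else 0

lemma hd_sum {n : ℕ} (x y : V n) :
    hammingDist x y = ∑ i : Fin n, if x i ≠ y i then 1 else 0 := by
  classical
  simp [hammingDist, Finset.card_filter]

lemma flip1 {n : ℕ} (x y : V n) (j : Fin n) :
    hammingDist (x + eb j) y + (if x j ≠ y j then 1 else 0)
      = hammingDist x y + (if x j = y j then 1 else 0) := by
  classical
  rw [hd_sum, hd_sum]
  rw [← Finset.sum_erase_add _ _ (Finset.mem_univ j),
      ← Finset.sum_erase_add _ _ (Finset.mem_univ j)]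
  have hsame : ∀ i ∈ Finset.univ.erase j,
      (if (x + eb j) i ≠ y i then 1 else 0) = (if x i ≠ y i then 1 else 0) := by
    intro i hi
    have hij : i ≠ j := (Finset.mem_erase.mp hi).1
    simp [eb, hij, Pi.add_apply]
  rw [Finset.sum_congr rfl hsame]
  have hxj : (x + eb j) j = x j + 1 := by simp [eb, Pi.add_apply]
  have hiff : ∀ a b : ZMod 2, (a + 1 ≠ b) ↔ a = b := by decide
  rw [hxj]
  by_cases h : x j = y j
  · simp [h, (hiff (x j) (y j)).mpr h]
  · have h2 : ¬ (x j + 1 ≠ y j) := by simp only [hiff]; exact h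
    simp [h, h2]

lemma norm_eb {n : ℕ} (j : Fin n) : hammingNorm (eb j) = 1 := by
  classical
  rw [← hammingDist_zero_right, hd_sum]
  rw [Finset.sum_eq_single j]
  · simp [eb]
  · intro i _ hij; simp [eb, hij]
  · intro h; exact absurd (Finset.mem_univ j) h

lemma dist_eb {n : ℕ} (β : V n) (j : Fin n) :
    hammingDist (eb j) β + (if β j ≠ 0 then 1 else 0)
      = hammingNorm β + (if β j = 0 then 1 else 0) := by
  have h := flip1 (0 : V n) β j
  rw [zero_add] at h
  simpa [eq_comm, hammingDist_zero_left] using h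

lemma sum_card {n : ℕ} (S : Finset (V n)) :
    ∑ j : Fin n, #(S.filter fun β => β j ≠ 0) = ∑ β ∈ S, hammingNorm β := by
  classical
  simp only [Finset.card_filter]
  rw [Finset.sum_comm]
  refine Finset.sum_congr rfl fun β _ => ?_
  rw [← hammingDist_zero_right β, hd_sum]
  simp

lemma arith_contra (F c m w n δ : ℕ) (hFc : F ≤ c) (hIneq : c * δ + m * F ≤ δ * F + m * c)
    (hA : c * w + n * F = n * c) (hc1 : 1 ≤ c) (hmn : δ + m = n) (hδ2 : 2 < δ)
    (hlow : n < 2 * δ) (hlt : δ < w) : False := by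
  obtain ⟨a, hac⟩ : ∃ a, c = F + a := ⟨c - F, by omega⟩
  rcases Nat.eq_zero_or_pos a with ha | ha
  · rw [ha, add_zero] at hac
    rw [hac] at hA hc1
    have hFw : F * w = 0 := Nat.add_right_cancel (hA.trans (zero_add (n * F)).symm)
    rcases Nat.mul_eq_zero.mp hFw with h | h <;> omega
  · rw [hac] at hIneq
    have e1 : (F + a) * δ + m * F = (δ * F + m * F) + a * δ := by ring
    have e2 : δ * F + m * (F + a) = (δ * F + m * F) + m * a := by ring
    rw [e1, e2] at hIneq
    have h2 : a * δ ≤ m * a := Nat.le_of_add_le_add_left hIneq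
    have h3 : δ ≤ m := by
      have h4 : a * δ ≤ a * m := by rwa [mul_comm m a] at h2
      exact Nat.le_of_mul_le_mul_left h4 ha
    omega

/-- A completely regular code with `|C| > 1`, `0 ∈ C` and `max(2, n/2) < δ < n` consists of
`0` together with its codewords of weight exactly `δ`. -/
theorem stmt_6 {n δ : ℕ} (C : Set (V n)) (hcr : CompletelyRegular C)
    (hcard : 1 < C.ncard) (h0 : (0 : V n) ∈ C) (hmin : IsMinDist C δ)
    (hδ2 : 2 < δ) (hlow : n < 2 * δ) (hhigh : δ < n) :
    C = {0} ∪ {β ∈ C | hammingNorm β = δ} := by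
  classical
  have hCfin : C.Finite := Set.toFinite C
  set Cf : Finset (V n) := hCfin.toFinset with hCf
  have hmemCf : ∀ β, β ∈ Cf ↔ β ∈ C := fun β => Set.Finite.mem_toFinset hCfin
  have key : ∀ (P : V n → Prop) [DecidablePred P],
      {β ∈ C | P β}.ncard = #(Cf.filter P) := by
    intro P _
    rw [← Set.ncard_coe_finset]
    congr 1
    ext β
    simp [hmemCf β]
  -- distance to code at codewords is 0
  have dist0 : ∀ α ∈ C, distTo C α = 0 := by
    intro α hα
    rw [distTo, Nat.sInf_eq_zero]
    exact Or.inl ⟨α, hα, hammingDist_self α⟩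
  -- weight of nonzero codewords
  have wt_ge : ∀ β ∈ C, β ≠ 0 → δ ≤ hammingNorm β := by
    intro β hβ hβ0
    have := hmin.1 0 h0 β hβ (fun h => hβ0 h.symm)
    rwa [hammingDist_zero_left] at this
  -- distance invariance
  have DI : ∀ α ∈ C, ∀ k : ℕ,
      #(Cf.filter fun β => hammingDist α β = k) = #(Cf.filter fun β => hammingNorm β = k) := by
    intro α hα k
    have h := hcr 0 k α 0 (dist0 α hα) (dist0 0 h0)
    rw [key (fun β => hammingDist α β = k), key (fun β => hammingDist 0 β = k)] at h
    rw [h]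
    congr 1
    apply Finset.filter_congr
    intro β _
    rw [hammingDist_zero_left]
  -- dist-1 criterion
  have dist1 : ∀ ν : V n, (∃ β ∈ C, hammingDist ν β = 1) → ν ∉ C → distTo C ν = 1 := by
    intro ν ⟨β, hβ, hdνβ⟩ hν
    have hmem1 : (1 : ℕ) ∈ hammingDist ν '' C := ⟨β, hβ, hdνβ⟩
    have h1 : sInf (hammingDist ν '' C) ≤ 1 := Nat.sInf_le hmem1
    have hne : (hammingDist ν '' C).Nonempty := ⟨1, hmem1⟩
    obtain ⟨β', hβ', hd'⟩ := Nat.sInf_mem hne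
    have hne0 : hammingDist ν β' ≠ 0 := by
      intro h
      exact hν (hammingDist_eq_zero.mp h ▸ hβ')
    rw [distTo]
    omega
  have CR1 : ∀ ν μ : V n, distTo C ν = 1 → distTo C μ = 1 → ∀ k : ℕ,
      #(Cf.filter fun β => hammingDist ν β = k) = #(Cf.filter fun β => hammingDist μ β = k) := by
    intro ν μ hν hμ k
    have h := hcr 1 k ν μ hν hμ
    rwa [key (fun β => hammingDist ν β = k), key (fun β => hammingDist μ β = k)] at h
  -- a maximal weight codeword
  have hCfne : Cf.Nonempty := ⟨0, (hmemCf 0).mpr h0⟩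
  obtain ⟨γ, hγCf, hγmax⟩ := Finset.exists_max_image Cf hammingNorm hCfne
  set w : ℕ := hammingNorm γ with hw
  have hwmax : ∀ β ∈ C, hammingNorm β ≤ w := fun β hβ => hγmax β ((hmemCf β).mpr hβ)
  obtain ⟨b, hbC, hb0⟩ := Set.exists_ne_of_one_lt_ncard hcard 0
  have hδw : δ ≤ w := le_trans (wt_ge b hbC hb0) (hwmax b hbC)
  -- main claim: w = δ
  have hweq : w = δ := by
    by_contra hneq
    have hlt : δ < w := lt_of_le_of_ne hδw (fun h => hneq h.symm)
    -- a codeword of weight δ exists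
    obtain ⟨α, hαC, α', hα'C, hαne, hαd⟩ := hmin.2
    have hβ₀ex : ∃ β₀, β₀ ∈ C ∧ hammingNorm β₀ = δ := by
      have hpos : 0 < #(Cf.filter fun β => hammingDist α β = δ) :=
        Finset.card_pos.mpr ⟨α', Finset.mem_filter.mpr ⟨(hmemCf α').mpr hα'C, hαd⟩⟩
      rw [DI α hαC δ] at hpos
      obtain ⟨β₀, hβ₀⟩ := Finset.card_pos.mp hpos
      obtain ⟨h1, h2⟩ := Finset.mem_filter.mp hβ₀
      exact ⟨β₀, (hmemCf β₀).mp h1, h2⟩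
    obtain ⟨β₀, hβ₀C, hβ₀δ⟩ := hβ₀ex
    -- no codeword is farther than w from β₀
    have distLe : ∀ β ∈ C, hammingDist β₀ β ≤ w := by
      intro β hβ
      have hpos : 0 < #(Cf.filter fun b => hammingDist β₀ b = hammingDist β₀ β) :=
        Finset.card_pos.mpr ⟨β, Finset.mem_filter.mpr ⟨(hmemCf β).mpr hβ, rfl⟩⟩
      rw [DI β₀ hβ₀C] at hpos
      obtain ⟨β', hβ'⟩ := Finset.card_pos.mp hpos
      obtain ⟨h1, h2⟩ := Finset.mem_filter.mp hβ'
      exact h2 ▸ hwmax β' ((hmemCf β').mp h1)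
    -- distTo of e_j and β₀ + e_j is 1
    have dist1e : ∀ j : Fin n, distTo C (eb j) = 1 := by
      intro j
      apply dist1
      · exact ⟨0, h0, by rw [hammingDist_zero_right, norm_eb]⟩
      · intro hmem
        have heb0 : eb j ≠ 0 := by
          intro h
          have := congrFun h j
          simp [eb] at this
        have := wt_ge (eb j) hmem heb0
        rw [norm_eb] at this
        omega
    have hd1b : ∀ j : Fin n, hammingDist (β₀ + eb j) β₀ = 1 := by
      intro j
      have := flip1 β₀ β₀ j
      simp [hammingDist_self] at this
      omega
    have dist1b : ∀ j : Fin n, distTo C (β₀ + eb j) = 1 := by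
      intro j
      apply dist1
      · exact ⟨β₀, hβ₀C, hd1b j⟩
      · intro hmem
        have hne' : β₀ ≠ β₀ + eb j := by
          intro h
          have := hd1b j
          rw [← h, hammingDist_self] at this
          omega
        have := hmin.1 β₀ hβ₀C (β₀ + eb j) hmem hne'
        rw [hammingDist_comm, hd1b j] at this
        omega
    -- the fixed base point
    have hn0 : 0 < n := by omega
    set j₀ : Fin n := ⟨0, hn0⟩ with hj₀
    set F : ℕ := #(Cf.filter fun β => hammingDist (eb j₀) β = w + 1) with hF
    set Sw : Finset (V n) := Cf.filter fun β => hammingNorm β = w with hSw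
    set c : ℕ := #Sw with hc
    have hc1 : 1 ≤ c := Finset.card_pos.mpr ⟨γ, Finset.mem_filter.mpr ⟨hγCf, rfl⟩⟩
    set D₀ : Finset (V n) := Cf.filter fun β => hammingDist β₀ β = w with hD₀
    have hD₀c : #D₀ = c := by
      have h := DI β₀ hβ₀C w
      rw [← hSw, ← hD₀] at h
      rw [h, hc]
    -- claim A : for every j, #{β ∈ C(w) : β j = 0} = F
    have claimA : ∀ j : Fin n, #(Sw.filter fun β => β j = 0) = F := by
      intro j
      have h := CR1 (eb j) (eb j₀) (dist1e j) (dist1e j₀) (w + 1)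
      rw [← hF] at h
      rw [← h, hSw, Finset.filter_filter]
      congr 1
      apply Finset.filter_congr
      intro β hβ
      have hb := dist_eb β j
      have hle := hwmax β ((hmemCf β).mp hβ)
      by_cases hj : β j = 0
      · simp only [hj, if_pos, if_neg, ne_eq, not_true_eq_false, if_false, if_true] at hb
        constructor
        · intro ⟨h1, _⟩; omega
        · intro hd; exact ⟨by omega, hj⟩
      · simp only [hj, ne_eq, not_false_eq_true, if_true, if_neg, if_false] at hb
        constructor
        · intro ⟨_, h2⟩; exact absurd h2 hj
        · intro hd; omega
    have claimAc : ∀ j : Fin n, #(Sw.filter fun β => β j ≠ 0) + F = c := by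
      intro j
      have h := Finset.card_filter_add_card_filter_not
        (s := Sw) (p := fun β => β j = 0)
      rw [claimA j] at h
      rw [add_comm]
      rw [hc]
      exact h
    -- n * F + c * w = n * c
    have hA : c * w + n * F = n * c := by
      have h2 : ∑ j : Fin n, #(Sw.filter fun β => β j ≠ 0) = c * w := by
        have h3 := sum_card Sw
        rw [Finset.sum_congr rfl (fun β hβ => (Finset.mem_filter.mp hβ).2),
          Finset.sum_const, smul_eq_mul, ← hc] at h3
        exact h3
      have h1 : ∑ j : Fin n, (#(Sw.filter fun β => β j ≠ 0) + F) = ∑ _j : Fin n, c :=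
        Finset.sum_congr rfl fun j _ => claimAc j
      rw [Finset.sum_add_distrib, h2, Finset.sum_const, Finset.sum_const,
        Finset.card_univ, Fintype.card_fin, smul_eq_mul, smul_eq_mul] at h1
      exact h1
    -- claim B : for every j, #{β ∈ D₀ : β j = β₀ j} = F
    have claimB : ∀ j : Fin n, #(D₀.filter fun β => β₀ j = β j) = F := by
      intro j
      have h := CR1 (β₀ + eb j) (eb j₀) (dist1b j) (dist1e j₀) (w + 1)
      rw [← hF] at h
      rw [← h, hD₀, Finset.filter_filter]
      congr 1
      apply Finset.filter_congr
      intro β hβ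
      have hb := flip1 β₀ β j
      have hle := distLe β ((hmemCf β).mp hβ)
      by_cases hj : β₀ j = β j
      · simp only [hj, ne_eq, not_true_eq_false, if_false, if_true, if_pos] at hb
        constructor
        · intro ⟨h1, _⟩; omega
        · intro hd; exact ⟨by omega, hj⟩
      · simp only [hj, ne_eq, not_false_eq_true, if_true, if_false, if_neg] at hb
        constructor
        · intro ⟨_, h2⟩; exact absurd h2 hj
        · intro hd; omega
    -- every element of D₀ is a nonzero codeword, hence has weight ≥ δ
    have hD₀wt : ∀ β ∈ D₀, δ ≤ hammingNorm β := by
      intro β hβ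
      rw [hD₀] at hβ
      obtain ⟨h1, h2⟩ := Finset.mem_filter.mp hβ
      have hβC := (hmemCf β).mp h1
      apply wt_ge β hβC
      intro h
      rw [h, hammingDist_zero_right, hβ₀δ] at h2
      omega
    -- sum of weights over D₀
    have hWlow : c * δ ≤ ∑ β ∈ D₀, hammingNorm β := by
      have := Finset.card_nsmul_le_sum D₀ hammingNorm δ hD₀wt
      rwa [hD₀c, smul_eq_mul] at this
    have hWsum : ∑ j : Fin n, #(D₀.filter fun β => β j ≠ 0) = ∑ β ∈ D₀, hammingNorm β :=
      sum_card D₀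
    -- support of β₀
    have hTcard : #(Finset.univ.filter fun j : Fin n => β₀ j ≠ 0) = δ := by
      rw [← hβ₀δ]
      rfl
    set m : ℕ := #(Finset.univ.filter fun j : Fin n => ¬ β₀ j ≠ 0) with hm
    have hmn : δ + m = n := by
      have h := Finset.card_filter_add_card_filter_not
        (s := (Finset.univ : Finset (Fin n))) (p := fun j : Fin n => β₀ j ≠ 0)
      rw [hTcard, ← hm, Finset.card_univ, Fintype.card_fin] at h
      exact h
    -- per-coordinate counts over D₀
    have hu_supp : ∀ j ∈ Finset.univ.filter (fun j : Fin n => β₀ j ≠ 0),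
        #(D₀.filter fun β => β j ≠ 0) = F := by
      intro j hj
      have hj' : β₀ j ≠ 0 := (Finset.mem_filter.mp hj).2
      rw [← claimB j]
      congr 1
      apply Finset.filter_congr
      intro β _
      have hzz : ∀ a b : ZMod 2, b ≠ 0 → (a ≠ 0 ↔ b = a) := by decide
      exact hzz (β j) (β₀ j) hj'
    have hu_non : ∀ j ∈ Finset.univ.filter (fun j : Fin n => ¬ β₀ j ≠ 0),
        #(D₀.filter fun β => β j ≠ 0) + F = c := by
      intro j hj
      have hj' : β₀ j = 0 := by
        have := (Finset.mem_filter.mp hj).2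
        simpa using this
      have h := Finset.card_filter_add_card_filter_not
        (s := D₀) (p := fun β => β₀ j = β j)
      rw [claimB j, hD₀c] at h
      have heq : #(D₀.filter fun β => β j ≠ 0) = #(D₀.filter fun β => ¬ β₀ j = β j) := by
        congr 1
        apply Finset.filter_congr
        intro β _
        have hzz : ∀ a b : ZMod 2, b = 0 → (a ≠ 0 ↔ ¬ b = a) := by decide
        exact hzz (β j) (β₀ j) hj'
      rw [heq, add_comm]
      exact h
    -- split the weight sum
    have hsplit := Finset.sum_filter_add_sum_filter_not Finset.univ
      (fun j : Fin n => β₀ j ≠ 0) (fun j => #(D₀.filter fun β => β j ≠ 0))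
    have hs1 : ∑ j ∈ Finset.univ.filter (fun j : Fin n => β₀ j ≠ 0),
        #(D₀.filter fun β => β j ≠ 0) = δ * F := by
      rw [Finset.sum_congr rfl hu_supp, Finset.sum_const, hTcard, smul_eq_mul]
    have hs2 : (∑ j ∈ Finset.univ.filter (fun j : Fin n => ¬ β₀ j ≠ 0),
        #(D₀.filter fun β => β j ≠ 0)) + m * F = m * c := by
      have h1 : ∑ j ∈ Finset.univ.filter (fun j : Fin n => ¬ β₀ j ≠ 0),
          (#(D₀.filter fun β => β j ≠ 0) + F)
          = ∑ _j ∈ Finset.univ.filter (fun j : Fin n => ¬ β₀ j ≠ 0), c :=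
        Finset.sum_congr rfl hu_non
      rw [Finset.sum_add_distrib, Finset.sum_const, Finset.sum_const, ← hm,
        smul_eq_mul, smul_eq_mul] at h1
      exact h1
    -- the final inequality
    have hkey : c * δ ≤ δ * F + ∑ j ∈ Finset.univ.filter (fun j : Fin n => ¬ β₀ j ≠ 0),
        #(D₀.filter fun β => β j ≠ 0) := by
      rw [← hs1, hsplit, hWsum]
      exact hWlow
    have hIneq : c * δ + m * F ≤ δ * F + m * c := by
      calc c * δ + m * F
          ≤ (δ * F + ∑ j ∈ Finset.univ.filter (fun j : Fin n => ¬ β₀ j ≠ 0),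
              #(D₀.filter fun β => β j ≠ 0)) + m * F := Nat.add_le_add_right hkey _
        _ = δ * F + ((∑ j ∈ Finset.univ.filter (fun j : Fin n => ¬ β₀ j ≠ 0),
              #(D₀.filter fun β => β j ≠ 0)) + m * F) := by rw [add_assoc]
        _ = δ * F + m * c := by rw [hs2]
    -- finish
    have hFc : F ≤ c := by rw [← claimAc j₀]; exact Nat.le_add_left F _
    exact arith_contra F c m w n δ hFc hIneq hA hc1 hmn hδ2 hlow hlt
  -- conclude
  have hall : ∀ β ∈ C, β ≠ 0 → hammingNorm β = δ :=
    fun β hβ hβ0 => le_antisymm (hweq ▸ hwmax β hβ) (wt_ge β hβ hβ0)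
  ext β
  simp only [Set.mem_union, Set.mem_singleton_iff, Set.mem_setOf_eq]
  constructor
  · intro hβ
    by_cases h : β = 0
    · exact Or.inl h
    · exact Or.inr ⟨hβ, hall β hβ h⟩
  · rintro (h | ⟨h, _⟩)
    · rw [h]; exact h0
    · exact h
end

section
/- Let C be a completely regular code in F_2^n with |C| > 1, containing the all-zero vector 0, whose minimum distance δ satisfies δ > max(2, n/2) and δ < n. Then n = 7 and δ = 4. -/
open Finset
namespace S9
variable {n : ℕ}

def supp (β : V n) : Finset (Fin n) := {i | β i ≠ 0}

lemma mem_supp {β : V n} {i : Fin n} : i ∈ supp β ↔ β i ≠ 0 := by simp [supp]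

lemma norm_eq (β : V n) : hammingNorm β = (supp β).card := rfl

lemma supp_inj {β γ : V n} (h : supp β = supp γ) : β = γ := by
  have h2 : ∀ a : ZMod 2, a = 0 ∨ a = 1 := by decide
  funext i
  have hb := mem_supp (β := β) (i := i)
  have hg := mem_supp (β := γ) (i := i)
  rw [h] at hb
  rcases h2 (β i) with h1 | h1 <;> rcases h2 (γ i) with h3 | h3 <;>
    simp [h1, h3] at hb hg ⊢ <;> tauto

def chi (S : Finset (Fin n)) : V n := fun i => if i ∈ S then 1 else 0

lemma supp_chi (S : Finset (Fin n)) : supp (chi S) = S := by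
  ext i; by_cases h : i ∈ S <;> simp [mem_supp, chi, h]

lemma dist_formula (ν β : V n) :
    hammingDist ν β + 2 * (supp ν ∩ supp β).card = (supp ν).card + (supp β).card := by
  have key : hammingDist ν β = (symmDiff (supp ν) (supp β)).card := by
    unfold hammingDist
    congr 1
    ext i
    have h2 : ∀ a b : ZMod 2, (a ≠ b) ↔ ((a ≠ 0) ≠ (b ≠ 0)) := by decide
    simp [mem_symmDiff, mem_supp, h2 (ν i) (β i)]
    tauto
  rw [key]
  have h1 : (symmDiff (supp ν) (supp β)).card + (supp ν ∩ supp β).card = (supp ν ∪ supp β).card := by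
    rw [symmDiff_eq_sup_sdiff_inf]
    exact Finset.card_sdiff_add_card_eq_card (Finset.inter_subset_union)
  have h2 := Finset.card_union_add_card_inter (supp ν) (supp β)
  omega


lemma exch1 (F : Finset (V n)) (Y : Finset (Fin n)) :
    ∑ β ∈ F, (Y ∩ supp β).card = ∑ j ∈ Y, (F.filter (fun β => j ∈ supp β)).card := by
  simp_rw [Finset.card_filter]
  rw [Finset.sum_comm]
  refine Finset.sum_congr rfl fun β _ => ?_
  rw [← Finset.sum_filter, Finset.filter_mem_eq_inter]
  simp

lemma exch2 (F : Finset (V n)) (Y : Finset (Fin n)) (s : ℕ) :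
    ∑ S ∈ Y.powersetCard s, (F.filter (fun β => S ⊆ supp β)).card
      = ∑ β ∈ F, ((Y ∩ supp β).card.choose s) := by
  simp_rw [Finset.card_filter]
  rw [Finset.sum_comm]
  refine Finset.sum_congr rfl fun β _ => ?_
  rw [← Finset.sum_filter]
  have h : (Y.powersetCard s).filter (fun S => S ⊆ supp β) = (Y ∩ supp β).powersetCard s := by
    ext T
    simp only [Finset.mem_filter, Finset.mem_powersetCard, Finset.subset_inter_iff]
    tauto
  rw [h, Finset.sum_const, smul_eq_mul, mul_one, Finset.card_powersetCard]



noncomputable def CF (C : Set (V n)) : Finset (V n) := (Set.toFinite C).toFinset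

lemma mem_CF {C : Set (V n)} {β : V n} : β ∈ CF C ↔ β ∈ C := Set.Finite.mem_toFinset _

lemma ncard_eq (C : Set (V n)) (P : V n → Prop) [DecidablePred P] :
    {β ∈ C | P β}.ncard = ((CF C).filter P).card := by
  rw [← Set.ncard_coe_finset]
  congr 1
  ext β
  simp [mem_CF]

noncomputable def Ab (C : Set (V n)) (δ : ℕ) : Finset (V n) :=
  (CF C).filter (fun β => hammingNorm β = δ)

noncomputable def Nb (C : Set (V n)) (δ : ℕ) (S : Finset (Fin n)) : ℕ :=
  ((Ab C δ).filter (fun β => S ⊆ supp β)).card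

section Code

variable {C : Set (V n)} {δ : ℕ}
variable (h0 : (0 : V n) ∈ C) (hmin : IsMinDist C δ)

include h0 hmin in
lemma wt_ge {β : V n} (hβ : β ∈ C) (hβ0 : β ≠ 0) : δ ≤ hammingNorm β := by
  have := hmin.1 0 h0 β hβ (Ne.symm hβ0)
  simpa using this

include h0 hmin in
lemma distTo_chi {S : Finset (Fin n)} (h2 : 2 * S.card ≤ δ) :
    distTo C (chi S) = S.card := by
  have hd0 : hammingDist (chi S) (0 : V n) = S.card := by
    rw [hammingDist_zero_right, norm_eq, supp_chi]
  refine le_antisymm (Nat.sInf_le ⟨0, h0, hd0⟩) ?_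
  refine le_csInf ⟨S.card, 0, h0, hd0⟩ ?_
  rintro m ⟨β, hβ, rfl⟩
  by_cases hβ0 : β = 0
  · subst hβ0; omega
  · have hw := wt_ge h0 hmin hβ hβ0
    have htri := hammingDist_triangle (0 : V n) (chi S) β
    rw [hammingDist_zero_left] at htri
    have hcs : hammingNorm (chi S) = S.card := by rw [norm_eq, supp_chi]
    omega

include h0 hmin in
lemma count_eq {s : ℕ} (hδ : 0 < δ) (h2 : 2 * s ≤ δ) {S : Finset (Fin n)} (hS : S.card = s) :
    ((CF C).filter (fun β => hammingDist (chi S) β = δ - s)).card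
      = (if δ = 2 * s then 1 else 0) + Nb C δ S := by
  have hiff : ∀ β, β ∈ C → (hammingDist (chi S) β = δ - s ↔
      ((β = 0 ∧ δ = 2 * s) ∨ (hammingNorm β = δ ∧ S ⊆ supp β))) := by
    intro β hβ
    by_cases hβ0 : β = 0
    · subst hβ0
      have hd0 : hammingDist (chi S) (0 : V n) = S.card := by
        rw [hammingDist_zero_right, norm_eq, supp_chi]
      simp only [hd0, hS, hammingNorm_zero]
      constructor
      · intro h
        exact Or.inl ⟨trivial, by omega⟩
      · rintro (⟨_, h⟩ | ⟨h, _⟩) <;> omega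
    · have hw := wt_ge h0 hmin hβ hβ0
      have hform := dist_formula (chi S) β
      rw [supp_chi, hS] at hform
      have hile : (S ∩ supp β).card ≤ s := by
        rw [← hS]; exact Finset.card_le_card (Finset.inter_subset_left)
      constructor
      · intro h
        have hwd : hammingNorm β = δ ∧ (S ∩ supp β).card = s := by
          rw [norm_eq] at hw ⊢; omega
        right
        refine ⟨hwd.1, ?_⟩
        rw [← Finset.inter_eq_left]
        apply Finset.eq_of_subset_of_card_le (Finset.inter_subset_left)
        omega
      · rintro (⟨h, _⟩ | ⟨hwδ, hsub⟩)
        · exact absurd h hβ0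
        · rw [← Finset.inter_eq_left] at hsub
          rw [norm_eq] at hwδ
          rw [hsub, hS] at hform
          omega
  have hsplit : (CF C).filter (fun β => hammingDist (chi S) β = δ - s)
      = if δ = 2 * s then insert 0 ((Ab C δ).filter (fun β => S ⊆ supp β))
        else (Ab C δ).filter (fun β => S ⊆ supp β) := by
    unfold Ab
    rw [Finset.filter_filter]
    by_cases hcase : δ = 2 * s
    · rw [if_pos hcase]
      ext β
      simp only [Finset.mem_filter, Finset.mem_insert, mem_CF]
      constructor
      · rintro ⟨hβ, hd⟩
        rcases (hiff β hβ).1 hd with ⟨h1, _⟩ | ⟨h1, h2'⟩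
        · left; exact h1
        · right; exact ⟨hβ, h1, h2'⟩
      · rintro (rfl | ⟨hβ, h1, h2'⟩)
        · exact ⟨h0, ((hiff 0 h0).2 (Or.inl ⟨rfl, hcase⟩))⟩
        · exact ⟨hβ, (hiff β hβ).2 (Or.inr ⟨h1, h2'⟩)⟩
    · rw [if_neg hcase]
      ext β
      simp only [Finset.mem_filter, mem_CF]
      constructor
      · rintro ⟨hβ, hd⟩
        rcases (hiff β hβ).1 hd with ⟨_, h1⟩ | ⟨h1, h2'⟩
        · exact absurd h1 hcase
        · exact ⟨hβ, h1, h2'⟩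
      · rintro ⟨hβ, h1, h2'⟩
        exact ⟨hβ, (hiff β hβ).2 (Or.inr ⟨h1, h2'⟩)⟩
  rw [hsplit]
  unfold Nb
  by_cases hcase : δ = 2 * s
  · rw [if_pos hcase, if_pos hcase, Finset.card_insert_of_notMem, Nat.add_comm]
    simp only [Finset.mem_filter, Ab, mem_CF]
    rintro ⟨⟨_, hw0⟩, _⟩
    simp at hw0
    omega
  · rw [if_neg hcase, if_neg hcase, Nat.zero_add]

include h0 hmin in
lemma constancy (hcr : CompletelyRegular C) {s : ℕ} (hδ : 0 < δ) (h2 : 2 * s ≤ δ)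
    {S T : Finset (Fin n)} (hS : S.card = s) (hT : T.card = s) :
    Nb C δ S = Nb C δ T := by
  have h1 := hcr s (δ - s) (chi S) (chi T)
    (by rw [distTo_chi h0 hmin (by rw [hS]; exact h2)]; exact hS)
    (by rw [distTo_chi h0 hmin (by rw [hT]; exact h2)]; exact hT)
  rw [ncard_eq, ncard_eq, count_eq h0 hmin hδ h2 hS, count_eq h0 hmin hδ h2 hT] at h1
  omega

end Code

section Translate
variable {C : Set (V n)} (c : V n)

lemma add_self_eq_zero' (u : V n) : u + u = 0 := by
  funext i
  have : ∀ a : ZMod 2, a + a = 0 := by decide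
  exact this (u i)

lemma dist_add_left' (u v : V n) : hammingDist (c + u) (c + v) = hammingDist u v := by
  unfold hammingDist
  congr 1
  ext i
  simp

lemma norm_add_eq_dist (u v : V n) : hammingNorm (u + v) = hammingDist u v := by
  unfold hammingNorm hammingDist
  congr 1
  ext i
  have : ∀ a b : ZMod 2, (a + b ≠ 0 ↔ a ≠ b) := by decide
  simp [this]

lemma distTo_translate (ν : V n) : distTo ((c + ·) '' C) ν = distTo C (c + ν) := by
  unfold distTo
  congr 1
  rw [Set.image_image]
  refine Set.image_congr fun γ _ => ?_
  rw [← dist_add_left' c ν (c + γ), ← add_assoc, add_self_eq_zero', zero_add]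

lemma translate_sets (ν : V n) (k : ℕ) :
    {β ∈ (c + ·) '' C | hammingDist ν β = k} = (c + ·) '' {γ ∈ C | hammingDist (c + ν) γ = k} := by
  ext β
  constructor
  · rintro ⟨⟨γ, hγ, rfl⟩, hd⟩
    refine ⟨γ, ⟨hγ, ?_⟩, rfl⟩
    rw [← hd, ← dist_add_left' c ν (c + γ), ← add_assoc, add_self_eq_zero', zero_add]
  · rintro ⟨γ, ⟨hγ, hd⟩, rfl⟩
    refine ⟨⟨γ, hγ, rfl⟩, ?_⟩
    rw [← hd, ← dist_add_left' c ν (c + γ), ← add_assoc, add_self_eq_zero', zero_add]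

lemma cr_translate (hcr : CompletelyRegular C) : CompletelyRegular ((c + ·) '' C) := by
  intro i k ν μ hν hμ
  rw [distTo_translate] at hν hμ
  rw [translate_sets, translate_sets,
    Set.ncard_image_of_injective _ (add_right_injective c),
    Set.ncard_image_of_injective _ (add_right_injective c)]
  exact hcr i k (c + ν) (c + μ) hν hμ

lemma minDist_translate {δ : ℕ} (hmin : IsMinDist C δ) : IsMinDist ((c + ·) '' C) δ := by
  constructor
  · rintro α ⟨γ, hγ, rfl⟩ β ⟨γ', hγ', rfl⟩ hne
    rw [dist_add_left']
    exact hmin.1 γ hγ γ' hγ' (fun h => hne (by rw [h]))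
  · obtain ⟨α, hα, β, hβ, hne, hd⟩ := hmin.2
    exact ⟨c + α, ⟨α, hα, rfl⟩, c + β, ⟨β, hβ, rfl⟩,
      fun h => hne (add_right_injective c h), by rw [dist_add_left']; exact hd⟩

end Translate

lemma arith1 (x l1 a : ℕ) (hx : 1 ≤ x) (ha : 1 ≤ a)
    (E1 : 2*x*l1 = 2*x + (a-1)*x) : a + 1 = 2 * l1 := by
  obtain ⟨b, rfl⟩ : ∃ b, a = b + 1 := ⟨a - 1, by omega⟩
  simp only [Nat.add_sub_cancel] at E1
  have E1' : (2*(x:ℤ))*l1 = 2*x + b*x := by exact_mod_cast E1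
  have hx' : (x:ℤ) ≠ 0 := Nat.cast_ne_zero.mpr (by omega)
  have h := mul_left_cancel₀ hx' (show (x:ℤ) * (2*l1) = (x:ℤ) * (2 + b) by linear_combination E1')
  have : (b:ℤ) + 2 = 2 * l1 := by linear_combination h.symm
  exact_mod_cast this

lemma arith2 (x l2 a : ℕ) (hx : 2 ≤ x) (ha : 1 ≤ a) (ha4 : a + 1 = 4 * l2)
    (E2 : (2*x).descFactorial 2 * l2 = (2*x).descFactorial 2 + (a - 1) * x.descFactorial 2) :
    l2 = x := by
  obtain ⟨p, rfl⟩ : ∃ p, x = p + 2 := ⟨x - 2, by omega⟩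
  obtain ⟨b, rfl⟩ : ∃ b, a = b + 1 := ⟨a - 1, by omega⟩
  have h0 : 2*(p+2) - 0 = 2*p+4 := by omega
  have h1 : 2*(p+2) - 1 = 2*p+3 := by omega
  have g0 : (p+2) - 0 = p+2 := by omega
  have g1 : (p+2) - 1 = p+1 := by omega
  simp only [Nat.descFactorial, h0, h1, g0, g1, Nat.add_sub_cancel, mul_one] at E2
  have E2' : ((2*p+3) : ℤ) * (2*p+4) * l2 = (2*p+3) * (2*p+4) + b * ((p+1) * (p+2)) := by
    exact_mod_cast E2
  have hb : (b:ℤ) = 4*l2 - 2 := by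
    have h' : b + 2 = 4 * l2 := by omega
    have h'' : (b:ℤ) + 2 = 4 * l2 := by exact_mod_cast h'
    linarith
  have hc : (2*((p:ℤ)+2)) ≠ 0 := by positivity
  have h := mul_left_cancel₀ hc (show (2*((p:ℤ)+2)) * ((2*p+3)*l2)
      = (2*((p:ℤ)+2)) * ((2*p+3) + (2*l2-1)*(p+1)) by linear_combination E2' + ((p:ℤ)+1)*((p:ℤ)+2)*hb)
  have : (l2:ℤ) = (p:ℤ) + 2 := by linear_combination h
  exact_mod_cast this

lemma arithA (x l3 a : ℕ) (hx : 3 ≤ x) (ha : 1 ≤ a) (ha4 : a + 1 = 4 * x)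
    (E3 : (2*x).descFactorial 3 * l3 = (2*x).descFactorial 3 + (a - 1) * x.descFactorial 3) :
    x = 2 * l3 := by
  obtain ⟨p, rfl⟩ : ∃ p, x = p + 3 := ⟨x - 3, by omega⟩
  obtain ⟨b, rfl⟩ : ∃ b, a = b + 1 := ⟨a - 1, by omega⟩
  have h0 : 2*(p+3) - 0 = 2*p+6 := by omega
  have h1 : 2*(p+3) - 1 = 2*p+5 := by omega
  have h2 : 2*(p+3) - 2 = 2*p+4 := by omega
  have g0 : (p+3) - 0 = p+3 := by omega
  have g1 : (p+3) - 1 = p+2 := by omega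
  have g2 : (p+3) - 2 = p+1 := by omega
  simp only [Nat.descFactorial, h0, h1, h2, g0, g1, g2, Nat.add_sub_cancel, mul_one] at E3
  have E3' : ((2*p+4) : ℤ) * ((2*p+5) * (2*p+6)) * l3
      = (2*p+4) * ((2*p+5) * (2*p+6)) + b * ((p+1) * ((p+2) * (p+3))) := by
    exact_mod_cast E3
  have hb : (b:ℤ) = 4*(p:ℤ)+10 := by
    have h' : b + 2 = 4 * (p + 3) := by omega
    have h'' : (b:ℤ) + 2 = 4 * ((p:ℤ) + 3) := by exact_mod_cast h'
    linarith
  have hc : (2*(2*(p:ℤ)+5)*((p:ℤ)+3)) ≠ 0 := by positivity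
  have h := mul_left_cancel₀ hc (show (2*(2*(p:ℤ)+5)*((p:ℤ)+3)) * ((2*p+4)*l3)
      = (2*(2*(p:ℤ)+5)*((p:ℤ)+3)) * ((2*p+4) + (p+1)*(p+2))
      by linear_combination E3' + ((p:ℤ)+1)*((p:ℤ)+2)*((p:ℤ)+3)*hb)
  have hc2 : ((p:ℤ)+2) ≠ 0 := by positivity
  have h2' := mul_left_cancel₀ hc2 (show ((p:ℤ)+2) * (2*l3) = ((p:ℤ)+2) * ((p:ℤ)+3)
      by linear_combination h)
  have : ((p:ℤ)+3) = 2*l3 := by linear_combination h2'.symm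
  exact_mod_cast this

lemma arithB (y l4 a : ℕ) (hy : 2 ≤ y) (ha : 1 ≤ a) (ha4 : a + 1 = 8 * y)
    (E4 : (2*(2*y)).descFactorial 4 * l4
        = (2*(2*y)).descFactorial 4 + (a - 1) * (2*y).descFactorial 4) :
    False := by
  obtain ⟨q, rfl⟩ : ∃ q, y = q + 2 := ⟨y - 2, by omega⟩
  obtain ⟨b, rfl⟩ : ∃ b, a = b + 1 := ⟨a - 1, by omega⟩
  have h0 : 2*(2*(q+2)) - 0 = 4*q+8 := by omega
  have h1 : 2*(2*(q+2)) - 1 = 4*q+7 := by omega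
  have h2 : 2*(2*(q+2)) - 2 = 4*q+6 := by omega
  have h3 : 2*(2*(q+2)) - 3 = 4*q+5 := by omega
  have g0 : 2*(q+2) - 0 = 2*q+4 := by omega
  have g1 : 2*(q+2) - 1 = 2*q+3 := by omega
  have g2 : 2*(q+2) - 2 = 2*q+2 := by omega
  have g3 : 2*(q+2) - 3 = 2*q+1 := by omega
  simp only [Nat.descFactorial, h0, h1, h2, h3, g0, g1, g2, g3, Nat.add_sub_cancel, mul_one] at E4
  have hb : b = 8*q+14 := by omega
  subst hb
  have E4' : ((4*q+5) : ℤ) * ((4*q+6) * ((4*q+7) * (4*q+8))) * l4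
      = (4*q+5) * ((4*q+6) * ((4*q+7) * (4*q+8)))
        + (8*(q:ℤ)+14) * ((2*q+1) * ((2*q+2) * ((2*q+3) * (2*q+4)))) := by
    exact_mod_cast E4
  have hc : (4*(4*(q:ℤ)+7)*((2*(q:ℤ)+3)*(2*(q:ℤ)+4))) ≠ 0 := by positivity
  have h := mul_left_cancel₀ hc
    (show (4*(4*(q:ℤ)+7)*((2*(q:ℤ)+3)*(2*(q:ℤ)+4))) * ((4*q+5)*l4)
        = (4*(4*(q:ℤ)+7)*((2*(q:ℤ)+3)*(2*(q:ℤ)+4))) * ((4*q+5) + (2*q+1)*(q+1))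
      by linear_combination E4')
  have hdvd : ((4*(q:ℤ)+5)) ∣ ((2*(q:ℤ)+1)*((q:ℤ)+1)) :=
    ⟨(l4:ℤ) - 1, by linear_combination -h⟩
  have h8 := hdvd.mul_left 8
  have hdvd3 : ((4*(q:ℤ)+5)) ∣ 3 := by
    have heq : (3:ℤ) = 8*((2*(q:ℤ)+1)*((q:ℤ)+1)) - (4*(q:ℤ)+5)*(4*(q:ℤ)+1) := by ring
    rw [heq]
    exact dvd_sub h8 (Dvd.intro _ rfl)
  have hle := Int.le_of_dvd (by norm_num) hdvd3
  have : (0:ℤ) ≤ (q:ℤ) := Int.natCast_nonneg q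
  linarith

lemma star_to_desc (s u v w r : ℕ)
    (E : u.choose s * v = u.choose s + w * r.choose s) :
    u.descFactorial s * v = u.descFactorial s + w * r.descFactorial s := by
  rw [Nat.descFactorial_eq_factorial_mul_choose, Nat.descFactorial_eq_factorial_mul_choose]
  calc s.factorial * u.choose s * v = s.factorial * (u.choose s * v) := mul_assoc _ _ _
    _ = s.factorial * (u.choose s + w * r.choose s) := by rw [E]
    _ = s.factorial * u.choose s + w * (s.factorial * r.choose s) := by ring

theorem main_lemma {n δ : ℕ} {C : Set (V n)}
    (hcr : CompletelyRegular C) (h0 : (0 : V n) ∈ C) (hmin : IsMinDist C δ)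
    (hδ2 : 2 < δ) (hlow : n < 2 * δ) (hhigh : δ < n)
    (hA : ∃ α ∈ C, hammingNorm α = δ) : n = 7 ∧ δ = 4 := by
  classical
  obtain ⟨α₀, hα₀C, hα₀w⟩ := hA
  have hδpos : 0 < δ := by omega
  set B₀ := supp α₀ with hB₀def
  have hB₀card : B₀.card = δ := by rw [hB₀def, ← norm_eq, hα₀w]
  have hα₀A : α₀ ∈ Ab C δ := Finset.mem_filter.2 ⟨mem_CF.2 hα₀C, hα₀w⟩
  have hAmem : ∀ β ∈ Ab C δ, β ∈ C ∧ (supp β).card = δ := by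
    intro β hβ
    have h := Finset.mem_filter.1 hβ
    exact ⟨mem_CF.1 h.1, by rw [← norm_eq]; exact h.2⟩
  have hapos : 1 ≤ (Ab C δ).card := Finset.card_pos.2 ⟨α₀, hα₀A⟩
  set a := (Ab C δ).card with hadef
  have hFup : ∀ β ∈ Ab C δ, β ≠ α₀ → 2 * (B₀ ∩ supp β).card ≤ δ := by
    intro β hβ hne
    obtain ⟨hβC, hβw⟩ := hAmem β hβ
    have hd := hmin.1 α₀ hα₀C β hβC (fun h => hne h.symm)
    have hform := dist_formula α₀ β
    rw [← hB₀def, hB₀card, hβw] at hform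
    omega
  have hFlow : ∀ β ∈ Ab C δ, 2 * δ ≤ (B₀ ∩ supp β).card + n := by
    intro β hβ
    have h1 := Finset.card_union_add_card_inter B₀ (supp β)
    have h2 : (B₀ ∪ supp β).card ≤ n := by
      have := Finset.card_le_univ (B₀ ∪ supp β)
      simpa using this
    have h3 := (hAmem β hβ).2
    omega
  have hNpos : ∀ S : Finset (Fin n), S ⊆ B₀ → 1 ≤ Nb C δ S := by
    intro S hS
    exact Finset.card_pos.2 ⟨α₀, Finset.mem_filter.2 ⟨hα₀A, by rw [← hB₀def]; exact hS⟩⟩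
  obtain ⟨T1, hT1B, hT1⟩ := Finset.exists_subset_card_eq (show 1 ≤ B₀.card by omega)
  set l1 := Nb C δ T1 with hl1def
  have hl1pos : 1 ≤ l1 := hNpos T1 hT1B
  have hc1 : ∀ S : Finset (Fin n), S.card = 1 → Nb C δ S = l1 :=
    fun S h => constancy h0 hmin hcr hδpos (by omega) h hT1
  have hNsing : ∀ j : Fin n, ((Ab C δ).filter (fun β => j ∈ supp β)).card = l1 := by
    intro j
    rw [← hc1 {j} (Finset.card_singleton j)]
    show _ = ((Ab C δ).filter (fun β => {j} ⊆ supp β)).card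
    congr 1
    apply Finset.filter_congr
    intro β _
    simp [Finset.singleton_subset_iff]
  have hE0 : n * l1 = (Ab C δ).card * δ := by
    have he := exch1 (Ab C δ) (univ : Finset (Fin n))
    rw [Finset.sum_congr rfl (fun j _ => hNsing j), Finset.sum_const, smul_eq_mul,
      Finset.card_univ, Fintype.card_fin] at he
    rw [← he]
    refine (Finset.sum_congr rfl fun β hβ => ?_).trans
      (by rw [Finset.sum_const, smul_eq_mul])
    rw [Finset.univ_inter]
    exact (hAmem β hβ).2
  have hE1 : δ * l1 = δ + ∑ β ∈ (Ab C δ).erase α₀, (B₀ ∩ supp β).card := by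
    have he := exch1 (Ab C δ) B₀
    rw [Finset.sum_congr rfl (fun j _ => hNsing j), Finset.sum_const, smul_eq_mul,
      hB₀card] at he
    rw [← he, ← Finset.add_sum_erase _ _ hα₀A]
    congr 1
    rw [← hB₀def, Finset.inter_self, hB₀card]
  by_cases hδ3 : δ = 3
  · exfalso
    subst hδ3
    rcases (show n = 4 ∨ n = 5 by omega) with hn | hn <;> subst hn
    · have hempty : (Ab C 3).erase α₀ = ∅ := by
        rw [Finset.eq_empty_iff_forall_notMem]
        intro β hβ
        have h1 := hFup β (Finset.mem_of_mem_erase hβ) (Finset.ne_of_mem_erase hβ)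
        have h2 := hFlow β (Finset.mem_of_mem_erase hβ)
        omega
      rw [hempty, Finset.sum_empty] at hE1
      omega
    · have ht1 : ∀ β ∈ (Ab C 3).erase α₀, (B₀ ∩ supp β).card = 1 := by
        intro β hβ
        have h1 := hFup β (Finset.mem_of_mem_erase hβ) (Finset.ne_of_mem_erase hβ)
        have h2 := hFlow β (Finset.mem_of_mem_erase hβ)
        omega
      rw [Finset.sum_congr rfl ht1, Finset.sum_const, smul_eq_mul, mul_one,
        Finset.card_erase_of_mem hα₀A] at hE1
      omega
  -- now δ ≥ 4
  have hδ4 : 4 ≤ δ := by omega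
  obtain ⟨T2, hT2B, hT2⟩ := Finset.exists_subset_card_eq (show 2 ≤ B₀.card by omega)
  set l2 := Nb C δ T2 with hl2def
  have hl2pos : 1 ≤ l2 := hNpos T2 hT2B
  have hc2 : ∀ S : Finset (Fin n), S.card = 2 → Nb C δ S = l2 :=
    fun S h => constancy h0 hmin hcr hδpos (by omega) h hT2
  have hpairc : ∀ j y : Fin n, j ≠ y →
      ((Ab C δ).filter (fun β => j ∈ supp β ∧ y ∈ supp β)).card = l2 := by
    intro j y hne
    rw [← hc2 {j, y} (Finset.card_pair hne)]
    show _ = ((Ab C δ).filter (fun β => ({j, y} : Finset (Fin n)) ⊆ supp β)).card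
    congr 1
    apply Finset.filter_congr
    intro β _
    simp [Finset.insert_subset_iff, Finset.singleton_subset_iff]
  have hE2 : l1 * (δ - 1) = (n - 1) * l2 := by
    have hn0 : 0 < n := by omega
    set j : Fin n := ⟨0, hn0⟩ with hjdef
    have he := exch1 ((Ab C δ).filter (fun β => j ∈ supp β)) (Finset.univ.erase j)
    have hL : ∀ β ∈ (Ab C δ).filter (fun β => j ∈ supp β),
        ((Finset.univ.erase j) ∩ supp β).card = δ - 1 := by
      intro β hβ
      obtain ⟨hβA, hβj⟩ := Finset.mem_filter.1 hβ
      have heq : (Finset.univ.erase j) ∩ supp β = (supp β).erase j := by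
        ext i
        simp only [Finset.mem_inter, Finset.mem_erase, Finset.mem_univ, and_true]
      rw [heq, Finset.card_erase_of_mem hβj, (hAmem β hβA).2]
    have hR : ∀ y ∈ Finset.univ.erase j,
        (((Ab C δ).filter (fun β => j ∈ supp β)).filter (fun β => y ∈ supp β)).card = l2 := by
      intro y hy
      rw [Finset.filter_filter]
      exact hpairc j y (fun h => (Finset.mem_erase.1 hy).1 h.symm)
    rw [Finset.sum_congr rfl hL, Finset.sum_const, smul_eq_mul, hNsing j,
      Finset.sum_congr rfl hR, Finset.sum_const, smul_eq_mul,
      Finset.card_erase_of_mem (Finset.mem_univ j), Finset.card_univ, Fintype.card_fin] at he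
    exact he
  have hE3 : ∀ j, j ∉ B₀ →
      ∑ β ∈ (Ab C δ).filter (fun β => j ∈ supp β), (B₀ ∩ supp β).card = δ * l2 := by
    intro j hj
    have he := exch1 ((Ab C δ).filter (fun β => j ∈ supp β)) B₀
    have hR : ∀ y ∈ B₀,
        (((Ab C δ).filter (fun β => j ∈ supp β)).filter (fun β => y ∈ supp β)).card = l2 := by
      intro y hy
      rw [Finset.filter_filter]
      exact hpairc j y (fun h => hj (h ▸ hy))
    rw [Finset.sum_congr rfl hR, Finset.sum_const, smul_eq_mul, hB₀card] at he
    exact he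
  have hbnd : ∀ j, j ∉ B₀ → ∀ β ∈ (Ab C δ).filter (fun β => j ∈ supp β),
      2 * (B₀ ∩ supp β).card ≤ δ := by
    intro j hj β hβ
    obtain ⟨hβA, hβj⟩ := Finset.mem_filter.1 hβ
    refine hFup β hβA (fun h => hj ?_)
    rw [hB₀def]
    exact h ▸ hβj
  obtain ⟨j₀, hj₀⟩ : ∃ j, j ∉ B₀ := by
    by_contra hall
    push_neg at hall
    have h := Finset.card_le_card (fun j (_ : j ∈ Finset.univ) => hall j)
    rw [Finset.card_univ, Fintype.card_fin, hB₀card] at h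
    omega
  have hsumle : 2 * (δ * l2) ≤ l1 * δ := by
    rw [← hE3 j₀ hj₀, Finset.mul_sum]
    calc ∑ β ∈ (Ab C δ).filter (fun β => j₀ ∈ supp β), 2 * (B₀ ∩ supp β).card
        ≤ ∑ _β ∈ (Ab C δ).filter (fun β => j₀ ∈ supp β), δ :=
          Finset.sum_le_sum (hbnd j₀ hj₀)
      _ = l1 * δ := by rw [Finset.sum_const, smul_eq_mul, hNsing j₀]
  have h2l2 : 2 * l2 ≤ l1 := by
    have h' : (2 * l2) * δ ≤ l1 * δ := by
      calc (2 * l2) * δ = 2 * (δ * l2) := by ring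
        _ ≤ l1 * δ := hsumle
    exact Nat.le_of_mul_le_mul_right h' hδpos
  have hn2δ : n = 2 * δ - 1 := by
    have h1 : l2 * (2 * (δ - 1)) ≤ l2 * (n - 1) := by
      calc l2 * (2 * (δ - 1)) = (2 * l2) * (δ - 1) := by ring
        _ ≤ l1 * (δ - 1) := Nat.mul_le_mul_right _ h2l2
        _ = (n - 1) * l2 := hE2
        _ = l2 * (n - 1) := mul_comm _ _
    have h2 := Nat.le_of_mul_le_mul_left h1 (by omega)
    omega
  have hl12 : l1 = 2 * l2 := by
    have h1 : l1 * (δ - 1) = (2 * l2) * (δ - 1) := by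
      rw [hE2]
      have h2 : n - 1 = 2 * (δ - 1) := by omega
      rw [h2]
      ring
    exact Nat.eq_of_mul_eq_mul_right (by omega) h1
  have key2 : ∀ j, j ∉ B₀ → ∀ β ∈ Ab C δ, j ∈ supp β →
      2 * (B₀ ∩ supp β).card = δ := by
    intro j hj β hβA hjβ
    by_contra hne
    have hβmem : β ∈ (Ab C δ).filter (fun γ => j ∈ supp γ) := Finset.mem_filter.2 ⟨hβA, hjβ⟩
    have hlt : ∑ γ ∈ (Ab C δ).filter (fun γ => j ∈ supp γ), 2 * (B₀ ∩ supp γ).card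
        < ∑ _γ ∈ (Ab C δ).filter (fun γ => j ∈ supp γ), δ :=
      Finset.sum_lt_sum (hbnd j hj) ⟨β, hβmem, by have := hbnd j hj β hβmem; omega⟩
    rw [← Finset.mul_sum, hE3 j hj, Finset.sum_const, smul_eq_mul, hNsing j, hl12] at hlt
    have heq : 2 * (δ * l2) = (2 * l2) * δ := by ring
    omega
  have inter_eq : ∀ β ∈ Ab C δ, β ≠ α₀ → 2 * (B₀ ∩ supp β).card = δ := by
    intro β hβ hne
    have hsne : supp β ≠ B₀ := by
      intro h
      exact hne (supp_inj (h.trans hB₀def))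
    have hnsub : ¬ supp β ⊆ B₀ := by
      intro hsub
      exact hsne (Finset.eq_of_subset_of_card_le hsub
        (by rw [hB₀card, (hAmem β hβ).2]))
    obtain ⟨j, hjβ, hjB⟩ := Finset.not_subset.1 hnsub
    exact key2 j hjB β hβ hjβ
  obtain ⟨β₁, hβ₁⟩ : ((Ab C δ).filter (fun γ => j₀ ∈ supp γ)).Nonempty := by
    rw [← Finset.card_pos, hNsing j₀]
    omega
  obtain ⟨hβ₁A, hβ₁j⟩ := Finset.mem_filter.1 hβ₁
  have hβ₁ne : β₁ ≠ α₀ := by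
    intro h
    apply hj₀
    rw [hB₀def]
    exact h ▸ hβ₁j
  set x := (B₀ ∩ supp β₁).card with hxdef
  have hδ2x : δ = 2 * x := (inter_eq β₁ hβ₁A hβ₁ne).symm
  have hx2 : 2 ≤ x := by omega
  have ht_x : ∀ β ∈ (Ab C δ).erase α₀, (B₀ ∩ supp β).card = x := by
    intro β hβ
    have h := inter_eq β (Finset.mem_of_mem_erase hβ) (Finset.ne_of_mem_erase hβ)
    omega
  have hstar : ∀ s : ℕ, ∀ Ts : Finset (Fin n), Ts.card = s → 2 * s ≤ δ →
      δ.choose s * Nb C δ Ts = δ.choose s + ((Ab C δ).card - 1) * x.choose s := by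
    intro s Ts hTs hs2
    have he := exch2 (Ab C δ) B₀ s
    have hL : ∀ S ∈ B₀.powersetCard s,
        ((Ab C δ).filter (fun β => S ⊆ supp β)).card = Nb C δ Ts := by
      intro S hS
      have hScard : S.card = s := (Finset.mem_powersetCard.1 hS).2
      exact constancy h0 hmin hcr hδpos hs2 hScard hTs
    rw [Finset.sum_congr rfl hL, Finset.sum_const, smul_eq_mul,
      Finset.card_powersetCard, hB₀card] at he
    have hRHS : ∑ β ∈ Ab C δ, ((B₀ ∩ supp β).card.choose s)
        = δ.choose s + ((Ab C δ).card - 1) * x.choose s := by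
      rw [← Finset.add_sum_erase _ _ hα₀A]
      congr 1
      · rw [← hB₀def]  
        rw [show B₀ ∩ B₀ = B₀ from Finset.inter_self B₀, hB₀card]
      · rw [Finset.sum_congr rfl (fun β hβ => by rw [ht_x β hβ]), Finset.sum_const,
          smul_eq_mul, Finset.card_erase_of_mem hα₀A]
    rw [hRHS] at he
    exact he
  have E1s := hstar 1 T1 hT1 (by omega)
  rw [Nat.choose_one_right, Nat.choose_one_right, ← hl1def, ← hadef, hδ2x] at E1s
  have ha1 : a + 1 = 2 * l1 := arith1 x l1 a (by omega) hapos E1s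
  have ha4 : a + 1 = 4 * l2 := by omega
  by_cases hxx : x = 2
  · exact ⟨by omega, by omega⟩
  · exfalso
    have hx3 : 3 ≤ x := by omega
    have E2s := hstar 2 T2 hT2 (by omega)
    rw [← hl2def, ← hadef, hδ2x] at E2s
    have hl2x : l2 = x := arith2 x l2 a hx2 hapos ha4
      (star_to_desc 2 (2 * x) l2 (a - 1) x E2s)
    have hax : a + 1 = 4 * x := by omega
    obtain ⟨T3, hT3B, hT3⟩ := Finset.exists_subset_card_eq (show 3 ≤ B₀.card by omega)
    have E3s := hstar 3 T3 hT3 (by omega)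
    set l3 := Nb C δ T3 with hl3def
    rw [← hadef, hδ2x] at E3s
    have hxeven : x = 2 * l3 := arithA x l3 a hx3 hapos hax
      (star_to_desc 3 (2 * x) l3 (a - 1) x E3s)
    have hy2 : 2 ≤ l3 := by omega
    obtain ⟨T4, hT4B, hT4⟩ := Finset.exists_subset_card_eq (show 4 ≤ B₀.card by omega)
    have E4s := hstar 4 T4 hT4 (by omega)
    set l4 := Nb C δ T4 with hl4def
    rw [← hadef, hδ2x, hxeven] at E4s
    exact arithB l3 l4 a hy2 hapos (by omega)
      (star_to_desc 4 (2 * (2 * l3)) l4 (a - 1) (2 * l3) E4s)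

end S9

/-- A completely regular code with `|C| > 1`, `0 ∈ C` and `max(2, n/2) < δ < n` forces
`n = 7` and `δ = 4`. -/
theorem stmt_9 {n δ : ℕ} (C : Set (V n)) (hcr : CompletelyRegular C)
    (hcard : 1 < C.ncard) (h0 : (0 : V n) ∈ C) (hmin : IsMinDist C δ)
    (hδ2 : 2 < δ) (hlow : n < 2 * δ) (hhigh : δ < n) :
    n = 7 ∧ δ = 4 := by
  obtain ⟨α, hα, β, hβ, hne, hd⟩ := hmin.2
  have h0' : (0 : V n) ∈ (α + ·) '' C := ⟨α, hα, S9.add_self_eq_zero' α⟩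
  have hw : ∃ γ ∈ (α + ·) '' C, hammingNorm γ = δ :=
    ⟨α + β, ⟨β, hβ, rfl⟩, by rw [S9.norm_add_eq_dist]; exact hd⟩
  exact S9.main_lemma (S9.cr_translate α hcr) h0' (S9.minDist_translate α hmin)
    hδ2 hlow hhigh hw
end

section
/- Let D be a set of vectors of F_2^7, each of weight 4, such that the supports of the elements of D form a 2-(7,4,2) design: every pair of distinct coordinates is contained in the support of exactly 2 elements of D (and distinct elements of D have distinct supports). Then there is a permutation σ of the 7 coordinates such that the image of D under x ↦ x∘σ equals 𝓗(4), the set of weight-4 codewords of the [7,4,3] Hamming code 𝓗. -/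
def r1 : V 7 := ![1,0,0,1,0,1,1]
def r2 : V 7 := ![0,1,0,1,1,1,0]
def r3 : V 7 := ![0,0,1,0,1,1,1]

/-- The standard bilinear form over `F_2`. -/
def bform {n : ℕ} (x y : V n) : ZMod 2 := ∑ i, x i * y i

/-- The `[7,4,3]` Hamming code: vectors orthogonal to `r1`, `r2`, `r3`. -/
def Ham : Set (V 7) := {x | bform r1 x = 0 ∧ bform r2 x = 0 ∧ bform r3 x = 0}

/-- `𝓗(k)`: the set of codewords of the Hamming code of weight `k`. -/
def HamW (k : ℕ) : Set (V 7) := {x ∈ Ham | hammingNorm x = k}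

/-- The support of a vector: the set of coordinates where it is nonzero. -/
def supp {n : ℕ} (x : V n) : Finset (Fin n) := Finset.univ.filter (fun i => x i ≠ 0)

lemma supp_card {n} (x : V n) : (supp x).card = hammingNorm x := rfl

section counting
variable (DF : Finset (V 7))
  (hw : ∀ β ∈ DF, (supp β).card = 4)
  (hd : ∀ i j : Fin 7, i ≠ j → (DF.filter (fun β => i ∈ supp β ∧ j ∈ supp β)).card = 2)

include hw hd

lemma card7 : DF.card = 7 := by
  have key : ∑ p ∈ (Finset.univ (α := Fin 7)).offDiag,
      (DF.filter (fun β => p.1 ∈ supp β ∧ p.2 ∈ supp β)).card = 12 * DF.card := by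
    have : ∀ p ∈ (Finset.univ (α := Fin 7)).offDiag,
        (DF.filter (fun β => p.1 ∈ supp β ∧ p.2 ∈ supp β)).card
        = ∑ β ∈ DF, if p.1 ∈ supp β ∧ p.2 ∈ supp β then 1 else 0 := by
      intro p _; exact Finset.card_filter _ _
    rw [Finset.sum_congr rfl this, Finset.sum_comm]
    have h2 : ∀ β ∈ DF, (∑ p ∈ (Finset.univ (α := Fin 7)).offDiag,
        if p.1 ∈ supp β ∧ p.2 ∈ supp β then 1 else 0) = 12 := by
      intro β hβ
      rw [← Finset.card_filter]
      have : (Finset.univ (α := Fin 7)).offDiag.filter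
          (fun p => p.1 ∈ supp β ∧ p.2 ∈ supp β) = (supp β).offDiag := by
        ext p
        simp only [Finset.mem_filter, Finset.mem_offDiag, Finset.mem_univ, true_and]
        tauto
      rw [this, Finset.offDiag_card, hw β hβ]
    rw [Finset.sum_congr rfl h2, Finset.sum_const, smul_eq_mul, mul_comm]
  have lhs : ∑ p ∈ (Finset.univ (α := Fin 7)).offDiag,
      (DF.filter (fun β => p.1 ∈ supp β ∧ p.2 ∈ supp β)).card = 84 := by
    have : ∀ p ∈ (Finset.univ (α := Fin 7)).offDiag,
        (DF.filter (fun β => p.1 ∈ supp β ∧ p.2 ∈ supp β)).card = 2 := by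
      intro p hp
      exact hd p.1 p.2 (Finset.mem_offDiag.mp hp).2.2
    rw [Finset.sum_congr rfl this, Finset.sum_const, smul_eq_mul, Finset.offDiag_card]
    simp
  omega

lemma deg4 (i : Fin 7) : (DF.filter (fun β => i ∈ supp β)).card = 4 := by
  have key : ∑ j ∈ Finset.univ.erase i,
      (DF.filter (fun β => i ∈ supp β ∧ j ∈ supp β)).card
      = 3 * (DF.filter (fun β => i ∈ supp β)).card := by
    have : ∀ j ∈ Finset.univ.erase i,
        (DF.filter (fun β => i ∈ supp β ∧ j ∈ supp β)).card
        = ∑ β ∈ DF, if i ∈ supp β ∧ j ∈ supp β then 1 else 0 := by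
      intro j _; exact Finset.card_filter _ _
    rw [Finset.sum_congr rfl this, Finset.sum_comm]
    have h2 : ∀ β ∈ DF, (∑ j ∈ Finset.univ.erase i,
        if i ∈ supp β ∧ j ∈ supp β then 1 else 0)
        = if i ∈ supp β then 3 else 0 := by
      intro β hβ
      by_cases hi : i ∈ supp β
      · simp only [hi, true_and, if_true]
        rw [← Finset.card_filter]
        have : (Finset.univ.erase i).filter (fun j => j ∈ supp β) = (supp β).erase i := by
          ext j; simp only [Finset.mem_filter, Finset.mem_erase, Finset.mem_univ, true_and]; tauto
        rw [this, Finset.card_erase_of_mem hi, hw β hβ]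
      · simp [hi]
    rw [Finset.sum_congr rfl h2]
    rw [Finset.card_filter, Finset.mul_sum]
    refine Finset.sum_congr rfl fun β _ => ?_
    by_cases hi : i ∈ supp β <;> simp [hi]
  have lhs : ∑ j ∈ Finset.univ.erase i,
      (DF.filter (fun β => i ∈ supp β ∧ j ∈ supp β)).card = 12 := by
    have : ∀ j ∈ Finset.univ.erase i,
        (DF.filter (fun β => i ∈ supp β ∧ j ∈ supp β)).card = 2 := by
      intro j hj
      exact hd i j (Ne.symm (Finset.mem_erase.mp hj).1)
    rw [Finset.sum_congr rfl this, Finset.sum_const, smul_eq_mul,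
      Finset.card_erase_of_mem (Finset.mem_univ i)]
    simp
  omega

lemma inter2 (b1 : V 7) (hb1 : b1 ∈ DF) (b2 : V 7) (hb2 : b2 ∈ DF) (hne : b1 ≠ b2) :
    (supp b1 ∩ supp b2).card = 2 := by
  have interf : ∀ b : V 7, supp b1 ∩ supp b = (supp b1).filter (fun i => i ∈ supp b) := by
    intro b; ext i; simp [Finset.mem_inter, Finset.mem_filter]
  have A : ∑ b ∈ DF, (supp b1 ∩ supp b).card = 16 := by
    have : ∀ b ∈ DF, (supp b1 ∩ supp b).card
        = ∑ i ∈ supp b1, if i ∈ supp b then 1 else 0 := by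
      intro b _; rw [interf b]; exact Finset.card_filter _ _
    rw [Finset.sum_congr rfl this, Finset.sum_comm]
    have h2 : ∀ i ∈ supp b1, (∑ b ∈ DF, if i ∈ supp b then 1 else 0) = 4 := by
      intro i _; rw [← Finset.card_filter]; exact deg4 DF hw hd i
    rw [Finset.sum_congr rfl h2, Finset.sum_const, smul_eq_mul, hw b1 hb1]
  have B : ∑ b ∈ DF, ((supp b1 ∩ supp b).offDiag).card = 24 := by
    have : ∀ b ∈ DF, ((supp b1 ∩ supp b).offDiag).card
        = ∑ p ∈ (supp b1).offDiag, if p.1 ∈ supp b ∧ p.2 ∈ supp b then 1 else 0 := by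
      intro b _
      rw [← Finset.card_filter]
      congr 1
      ext p
      simp only [Finset.mem_offDiag, Finset.mem_filter, Finset.mem_inter]
      tauto
    rw [Finset.sum_congr rfl this, Finset.sum_comm]
    have h2 : ∀ p ∈ (supp b1).offDiag,
        (∑ b ∈ DF, if p.1 ∈ supp b ∧ p.2 ∈ supp b then 1 else 0) = 2 := by
      intro p hp
      rw [← Finset.card_filter]
      exact hd p.1 p.2 (Finset.mem_offDiag.mp hp).2.2
    rw [Finset.sum_congr rfl h2, Finset.sum_const, smul_eq_mul,
      Finset.offDiag_card, hw b1 hb1]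
  set E := DF.erase b1 with hE
  have hcardE : E.card = 6 := by
    rw [hE, Finset.card_erase_of_mem hb1, card7 DF hw hd]
  have hself : supp b1 ∩ supp b1 = supp b1 := Finset.inter_self _
  have A' : ∑ b ∈ E, (supp b1 ∩ supp b).card = 12 := by
    have := Finset.add_sum_erase DF (fun b => (supp b1 ∩ supp b).card) hb1
    rw [A] at this
    simp only [hself, hw b1 hb1] at this
    rw [← hE] at this
    omega
  have B' : ∑ b ∈ E, ((supp b1 ∩ supp b).offDiag).card = 12 := by
    have := Finset.add_sum_erase DF (fun b => ((supp b1 ∩ supp b).offDiag).card) hb1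
    rw [B] at this
    simp only [hself, Finset.offDiag_card, hw b1 hb1] at this ⊢
    rw [← hE] at this
    omega
  -- variance argument over ℤ
  have key : ∑ b ∈ E, (((supp b1 ∩ supp b).card : ℤ) - 2)^2 = 0 := by
    have expand : ∀ b ∈ E, (((supp b1 ∩ supp b).card : ℤ) - 2)^2
        = (((supp b1 ∩ supp b).offDiag.card : ℤ)) - 3 * ((supp b1 ∩ supp b).card : ℤ) + 4 := by
      intro b _
      rw [Finset.offDiag_card]
      set m := (supp b1 ∩ supp b).card
      have hm : m ≤ m * m := by
        rcases Nat.eq_zero_or_pos m with h | h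
        · simp [h]
        · exact Nat.le_mul_of_pos_left m h
      push_cast [Nat.cast_sub hm]
      ring
    rw [Finset.sum_congr rfl expand, Finset.sum_add_distrib, Finset.sum_sub_distrib,
      ← Finset.mul_sum, Finset.sum_const, hcardE]
    have c1 : ∑ b ∈ E, (((supp b1 ∩ supp b).offDiag.card : ℤ)) = 12 := by
      rw [← Nat.cast_sum, B']; norm_num
    have c2 : ∑ b ∈ E, (((supp b1 ∩ supp b).card : ℤ)) = 12 := by
      rw [← Nat.cast_sum, A']; norm_num
    rw [c1, c2]; norm_num
  have hb2E : b2 ∈ E := Finset.mem_erase.mpr ⟨Ne.symm hne, hb2⟩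
  have := (Finset.sum_eq_zero_iff_of_nonneg (fun b _ => sq_nonneg _)).mp key b2 hb2E
  have h0 : ((supp b1 ∩ supp b2).card : ℤ) - 2 = 0 := by
    exact pow_eq_zero_iff (by norm_num) |>.mp this
  omega


omit hw hd in
lemma supp_inj' {n} (x y : V n) (h : supp x = supp y) : x = y := by
  funext i
  have := Finset.ext_iff.mp h i
  simp only [supp, Finset.mem_filter, Finset.mem_univ, true_and] at this
  revert this; generalize x i = a; generalize y i = b
  revert a b; decide

omit hw hd in
lemma supp_add' {n} (x y : V n) : supp (x + y) = symmDiff (supp x) (supp y) := by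
  ext i
  simp only [supp, Finset.mem_symmDiff, Finset.mem_filter, Finset.mem_univ, true_and, Pi.add_apply]
  generalize x i = a; generalize y i = b
  revert a b; decide

lemma closureD (b1 : V 7) (hb1 : b1 ∈ DF) (b2 : V 7) (hb2 : b2 ∈ DF) (hne : b1 ≠ b2) :
    b1 + b2 ∈ DF := by
  set s := supp b1
  set t := supp b2
  have hs4 : s.card = 4 := hw b1 hb1
  have ht4 : t.card = 4 := hw b2 hb2
  have hT : (s ∩ t).card = 2 := inter2 DF hw hd b1 hb1 b2 hb2 hne
  have hU : (s ∪ t).card = 6 := by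
    have := Finset.card_union_add_card_inter s t
    omega
  have hcompl : (Finset.univ \ (s ∪ t)).card = 1 := by
    rw [Finset.card_sdiff_of_subset (Finset.subset_univ _), hU]
    simp
  obtain ⟨e, he⟩ := Finset.card_eq_one.mp hcompl
  have heU : e ∉ s ∪ t := by
    have : e ∈ Finset.univ \ (s ∪ t) := by rw [he]; exact Finset.mem_singleton_self e
    exact (Finset.mem_sdiff.mp this).2
  have he1 : e ∉ s := fun h => heU (Finset.mem_union_left _ h)
  have he2 : e ∉ t := fun h => heU (Finset.mem_union_right _ h)
  -- blocks avoiding e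
  have hFcard : (DF.filter (fun b => ¬ e ∈ supp b)).card = 3 := by
    have h1 := deg4 DF hw hd e
    have h2 := Finset.card_filter_add_card_filter_not
      (s := DF) (p := fun b => e ∈ supp b)
    rw [card7 DF hw hd, h1] at h2
    omega
  have hnsub : ¬ (DF.filter (fun b => ¬ e ∈ supp b)) ⊆ ({b1, b2} : Finset (V 7)) := by
    intro hsub
    have := Finset.card_le_card hsub
    have : ({b1, b2} : Finset (V 7)).card ≤ 2 := Finset.card_insert_le _ _ |>.trans (by simp)
    omega
  obtain ⟨b7, hb7F, hb7n⟩ := Finset.not_subset.mp hnsub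
  have hb7D : b7 ∈ DF := (Finset.mem_filter.mp hb7F).1
  have hb7e : e ∉ supp b7 := (Finset.mem_filter.mp hb7F).2
  have hb7n1 : b7 ≠ b1 := fun h => hb7n (by simp [h])
  have hb7n2 : b7 ≠ b2 := fun h => hb7n (by simp [h])
  have hb74 : (supp b7).card = 4 := hw b7 hb7D
  have hsub : supp b7 ⊆ s ∪ t := by
    intro i hi
    by_contra hiU
    have : i ∈ Finset.univ \ (s ∪ t) := Finset.mem_sdiff.mpr ⟨Finset.mem_univ i, hiU⟩
    rw [he, Finset.mem_singleton] at this
    exact hb7e (this ▸ hi)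
  have m1 : (supp b7 ∩ s).card = 2 := inter2 DF hw hd b7 hb7D b1 hb1 hb7n1
  have m2 : (supp b7 ∩ t).card = 2 := inter2 DF hw hd b7 hb7D b2 hb2 hb7n2
  have hT0 : (supp b7 ∩ (s ∩ t)).card = 0 := by
    have hinter : supp b7 ∩ (s ∪ t) = supp b7 := Finset.inter_eq_left.mpr hsub
    have hdistrib : supp b7 ∩ (s ∪ t) = (supp b7 ∩ s) ∪ (supp b7 ∩ t) :=
      Finset.inter_union_distrib_left _ _ _
    have hassoc : (supp b7 ∩ s) ∩ (supp b7 ∩ t) = supp b7 ∩ (s ∩ t) := by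
      ext i; simp only [Finset.mem_inter]; tauto
    have := Finset.card_union_add_card_inter (supp b7 ∩ s) (supp b7 ∩ t)
    rw [hassoc, ← hdistrib, hinter, hb74, m1, m2] at this
    omega
  have hsubSD : supp b7 ⊆ symmDiff s t := by
    intro i hi
    have hiU : i ∈ s ∪ t := hsub hi
    have hiI : i ∉ s ∩ t := by
      intro hiI
      have : i ∈ supp b7 ∩ (s ∩ t) := Finset.mem_inter.mpr ⟨hi, hiI⟩
      rw [Finset.card_eq_zero.mp hT0] at this
      exact absurd this (Finset.notMem_empty i)
    rw [Finset.mem_symmDiff]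
    rw [Finset.mem_union] at hiU
    rw [Finset.mem_inter] at hiI
    tauto
  have hSD4 : (symmDiff s t).card = 4 := by
    have h1 : symmDiff s t = (s ∪ t) \ (s ∩ t) := by
      ext i
      simp only [Finset.mem_symmDiff, Finset.mem_sdiff, Finset.mem_union, Finset.mem_inter]
      tauto
    rw [h1, Finset.card_sdiff_of_subset (Finset.inter_subset_union), hU, hT]
  have heq : supp b7 = symmDiff s t :=
    Finset.eq_of_subset_of_card_le hsubSD (by omega)
  have : b7 = b1 + b2 := supp_inj' _ _ (by rw [heq, supp_add'])
  exact this ▸ hb7D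

end counting

abbrev T3 := ZMod 2 × ZMod 2 × ZMod 2
def A3 : Finset T3 := Finset.univ.erase 0
noncomputable def phi (v1 v2 v3 : V 7) (a : T3) : V 7 := a.1 • v1 + a.2.1 • v2 + a.2.2 • v3

lemma zmod2_cases (a : ZMod 2) : a = 0 ∨ a = 1 := by revert a; decide

lemma phi_add (v1 v2 v3 : V 7) (a b : T3) :
    phi v1 v2 v3 (a + b) = phi v1 v2 v3 a + phi v1 v2 v3 b := by
  simp only [phi, Prod.fst_add, Prod.snd_add, add_smul]
  abel

lemma self_add (x : V 7) : x + x = 0 := by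
  funext i; simp only [Pi.add_apply, Pi.zero_apply]
  generalize x i = a; revert a; decide

lemma t3_self_add (a : T3) : a + a = 0 := by
  rcases a with ⟨a1, a2, a3⟩
  revert a1 a2 a3; decide

set_option maxRecDepth 10000 in
lemma hamA3 : HamW 4 = ↑(A3.image (phi r1 r2 r3)) := by
  have key : ∀ x : V 7,
      ((bform r1 x = 0 ∧ bform r2 x = 0 ∧ bform r3 x = 0) ∧ hammingNorm x = 4)
      ↔ x ∈ A3.image (fun a : T3 => a.1 • r1 + a.2.1 • r2 + a.2.2 • r3) := by
    decide
  ext x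
  rw [Finset.mem_coe]
  have h2 : x ∈ HamW 4 ↔ ((bform r1 x = 0 ∧ bform r2 x = 0 ∧ bform r3 x = 0) ∧ hammingNorm x = 4) := Iff.rfl
  rw [h2, key x]
  unfold phi
  rfl

def gcol (i : Fin 7) : T3 := (r1 i, r2 i, r3 i)

lemma gcol_ne (i : Fin 7) : gcol i ≠ 0 := by revert i; decide

lemma gcol_inj : Function.Injective gcol := by decide

lemma card_nonzeroT3 : Fintype.card {a : T3 // a ≠ 0} = 7 := by decide

lemma phi_apply (v1 v2 v3 : V 7) (a : T3) (i : Fin 7) :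
    phi v1 v2 v3 a i = a.1 * v1 i + a.2.1 * v2 i + a.2.2 * v3 i := by
  simp [phi]

lemma mem_supp {n} (x : V n) (i : Fin n) : i ∈ supp x ↔ x i ≠ 0 := by simp [supp]

lemma t3_add_eq_zero {a b : T3} (h : a + b = 0) : a = b := by
  have h2 : a + (b + b) = 0 + b := by rw [← add_assoc, h]
  simpa [t3_self_add b] using h2

set_option maxHeartbeats 2000000 in
/-- A set of weight-4 vectors in `F_2^7` whose supports form a `2-(7,4,2)` design is,
up to a coordinate permutation, the set `𝓗(4)` of weight-4 Hamming codewords. -/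
theorem stmt_10 (D : Set (V 7))
    (hwt : ∀ α ∈ D, hammingNorm α = 4)
    (hinj : ∀ α ∈ D, ∀ β ∈ D, supp α = supp β → α = β)
    (hdes : ∀ i j : Fin 7, i ≠ j →
      {β ∈ D | i ∈ supp β ∧ j ∈ supp β}.ncard = 2) :
    ∃ σ : Equiv.Perm (Fin 7), (fun x : V 7 => x ∘ σ) '' D = HamW 4 := by
  classical
  have hDfin : D.Finite := Set.toFinite D
  set DF := hDfin.toFinset with hDFdef
  have hmem : ∀ β, β ∈ DF ↔ β ∈ D := fun β => Set.Finite.mem_toFinset _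
  have hw : ∀ β ∈ DF, (supp β).card = 4 := fun β hβ => by
    rw [supp_card]; exact hwt β ((hmem β).mp hβ)
  have hd : ∀ i j : Fin 7, i ≠ j →
      (DF.filter (fun β => i ∈ supp β ∧ j ∈ supp β)).card = 2 := by
    intro i j hij
    have hset : {β ∈ D | i ∈ supp β ∧ j ∈ supp β}
        = ↑(DF.filter (fun β => i ∈ supp β ∧ j ∈ supp β)) := by
      ext β
      simp only [Set.mem_setOf_eq, Finset.coe_filter, hmem β]
    have h2 := hdes i j hij
    rw [hset, Set.ncard_coe_finset] at h2
    exact h2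
  have h7 := card7 DF hw hd
  have h0 : (0 : V 7) ∉ DF := by
    intro h
    have h4 := hw 0 h
    simp [supp] at h4
  obtain ⟨v1, hv1⟩ := Finset.card_pos.mp (by omega : 0 < DF.card)
  obtain ⟨v2, hv2'⟩ := Finset.card_pos.mp
    (by rw [Finset.card_erase_of_mem hv1, h7]; omega : 0 < (DF.erase v1).card)
  have hv2 : v2 ∈ DF := (Finset.mem_erase.mp hv2').2
  have hne21 : v2 ≠ v1 := (Finset.mem_erase.mp hv2').1
  have h12 : v1 + v2 ∈ DF := closureD DF hw hd v1 hv1 v2 hv2 (Ne.symm hne21)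
  have hSne : ¬ DF ⊆ ({v1, v2, v1 + v2} : Finset (V 7)) := by
    intro hsub
    have hc := Finset.card_le_card hsub
    have hc3 : ({v1, v2, v1 + v2} : Finset (V 7)).card ≤ 3 := by
      apply le_trans (Finset.card_insert_le _ _)
      have := Finset.card_insert_le v2 ({v1 + v2} : Finset (V 7))
      simp only [Finset.card_singleton] at this
      omega
    omega
  obtain ⟨v3, hv3, hv3S⟩ := Finset.not_subset.mp hSne
  simp only [Finset.mem_insert, Finset.mem_singleton, not_or] at hv3S
  obtain ⟨hne31, hne32, hne312⟩ := hv3S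
  have h13 : v1 + v3 ∈ DF := closureD DF hw hd v1 hv1 v3 hv3 (fun h => hne31 h.symm)
  have h23 : v2 + v3 ∈ DF := closureD DF hw hd v2 hv2 v3 hv3 (fun h => hne32 h.symm)
  have h123 : v1 + v2 + v3 ∈ DF :=
    closureD DF hw hd (v1 + v2) h12 v3 hv3 (fun h => hne312 h.symm)
  have hmemphi : ∀ a : T3, a ≠ 0 → phi v1 v2 v3 a ∈ DF := by
    rintro ⟨a1, a2, a3⟩ ha
    rcases zmod2_cases a1 with rfl | rfl <;> rcases zmod2_cases a2 with rfl | rfl <;>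
      rcases zmod2_cases a3 with rfl | rfl <;>
      simp only [phi, zero_smul, one_smul, zero_add, add_zero]
    · exact absurd rfl ha
    · exact hv3
    · exact hv2
    · exact h23
    · exact hv1
    · exact h13
    · exact h12
    · exact h123
  have hinjphi : Function.Injective (phi v1 v2 v3) := by
    intro a b hab
    by_contra hne
    have habne : a + b ≠ 0 := fun h => hne (t3_add_eq_zero h)
    have hz : phi v1 v2 v3 (a + b) = 0 := by
      rw [phi_add, hab, self_add]
    exact h0 (hz ▸ hmemphi (a + b) habne)
  have hA3card : A3.card = 7 := by decide
  have himage : DF = A3.image (phi v1 v2 v3) := by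
    refine (Finset.eq_of_subset_of_card_le ?_ ?_).symm
    · intro b hb
      obtain ⟨a, ha, rfl⟩ := Finset.mem_image.mp hb
      exact hmemphi a (Finset.mem_erase.mp ha).1
    · rw [Finset.card_image_of_injective A3 hinjphi, hA3card, h7]
  set f : Fin 7 → T3 := fun i => (v1 i, v2 i, v3 i) with hfdef
  have hfnz : ∀ i, f i ≠ 0 := by
    intro i hfi
    simp only [hfdef, Prod.mk_eq_zero] at hfi
    obtain ⟨hz1, hz2, hz3⟩ := hfi
    obtain ⟨b, hb⟩ := Finset.card_pos.mp
      (by rw [deg4 DF hw hd i]; omega : 0 < (DF.filter (fun β => i ∈ supp β)).card)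
    rw [Finset.mem_filter] at hb
    obtain ⟨a, _, rfl⟩ := Finset.mem_image.mp (himage ▸ hb.1)
    have hzz : phi v1 v2 v3 a i = 0 := by
      rw [phi_apply, hz1, hz2, hz3]; ring
    exact (mem_supp _ i).mp hb.2 hzz
  have hfinj : Function.Injective f := by
    intro i j hij
    by_contra hne
    have hval : ∀ b ∈ DF, b i = b j := by
      intro b hb
      obtain ⟨a, _, rfl⟩ := Finset.mem_image.mp (himage ▸ hb)
      have h1 : v1 i = v1 j := congrArg Prod.fst hij
      have h2 : v2 i = v2 j := congrArg (fun p => p.2.1) hij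
      have h3 : v3 i = v3 j := congrArg (fun p => p.2.2) hij
      rw [phi_apply, phi_apply, h1, h2, h3]
    have hfeq : DF.filter (fun β => i ∈ supp β ∧ j ∈ supp β)
        = DF.filter (fun β => i ∈ supp β) := by
      apply Finset.filter_congr
      intro b hb
      simp only [mem_supp, hval b hb, eq_iff_iff]
      tauto
    have hcontra := hd i j hne
    rw [hfeq, deg4 DF hw hd i] at hcontra
    omega
  have hbijF : Function.Bijective (fun i => (⟨f i, hfnz i⟩ : {a : T3 // a ≠ 0})) := by
    rw [Fintype.bijective_iff_injective_and_card]
    constructor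
    · intro i j h
      exact hfinj (congrArg Subtype.val h)
    · rw [card_nonzeroT3, Fintype.card_fin]
  have hbijG : Function.Bijective (fun i => (⟨gcol i, gcol_ne i⟩ : {a : T3 // a ≠ 0})) := by
    rw [Fintype.bijective_iff_injective_and_card]
    constructor
    · intro i j h
      exact gcol_inj (congrArg Subtype.val h)
    · rw [card_nonzeroT3, Fintype.card_fin]
  set F := Equiv.ofBijective _ hbijF
  set G := Equiv.ofBijective _ hbijG
  set σ : Equiv.Perm (Fin 7) := G.trans F.symm with hσdef
  have hσ : ∀ i, f (σ i) = gcol i := by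
    intro i
    have hFG : F (σ i) = G i := by
      simp only [hσdef, Equiv.trans_apply, Equiv.apply_symm_apply]
    exact congrArg Subtype.val hFG
  have hc1 : ∀ i, v1 (σ i) = r1 i := fun i => congrArg Prod.fst (hσ i)
  have hc2 : ∀ i, v2 (σ i) = r2 i := fun i => congrArg (fun p => p.2.1) (hσ i)
  have hc3 : ∀ i, v3 (σ i) = r3 i := fun i => congrArg (fun p => p.2.2) (hσ i)
  refine ⟨σ, ?_⟩
  have hDcoe : D = ↑DF := (Set.Finite.coe_toFinset _).symm
  rw [hDcoe, himage, hamA3, ← Finset.coe_image, Finset.image_image]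
  rw [Finset.coe_inj]
  apply Finset.image_congr
  intro a _
  funext i
  simp only [Function.comp_apply]
  rw [phi_apply, phi_apply, hc1, hc2, hc3]
end
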